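/- arXiv:1504.05666 — 8 statements merged into one kernel-verified Lean document; each statement's English description precedes it below -/
import Mathlib

section
/- Let 𝒯, 𝒳, 𝒴 be finite sets, P_XY a pmf on 𝒳×𝒴, W a kernel assigning to each (x,y) a pmf W(·|x,y) on 𝒯, and V a kernel assigning to each (x,y) a pmf V(·,·|x,y) on 𝒯×𝒯. Define P₁ on 𝒯×𝒯×𝒳×𝒴 by P₁(τ,τ',x,y) = P_XY(x,y)·W(τ|x,y)·1[τ = τ'], and P₂ on 𝒯×𝒯×𝒳×𝒴 by P₂(τ,τ',x,y) = P_XY(x,y)·V(τ,τ'|x,y). Then there exists a pmf μ on 𝒯×𝒯×𝒯×𝒳×𝒴, describing random variables (Π, Π_X, Π_Y, X, Y), such that the marginal of (Π, X, Y) under μ equals P_XY(x,y)·W(τ|x,y), the marginal of (Π_X, Π_Y, X, Y) under μ equals P₂, and μ({Π = Π_X = Π_Y}) = 1 − d(P₁, P₂). -/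
open scoped Classical

lemma coupling_aux {T : Type*} [Fintype T] (w : T → ℝ) (v : T → T → ℝ)
    (hw0 : ∀ t, 0 ≤ w t) (hw1 : ∑ t, w t = 1)
    (hv0 : ∀ a b, 0 ≤ v a b) (hv1 : ∑ a, ∑ b, v a b = 1) :
    ∃ ν : T → T → T → ℝ,
      (∀ t a b, 0 ≤ ν t a b) ∧
      (∀ t, ∑ a, ∑ b, ν t a b = w t) ∧
      (∀ a b, ∑ t, ν t a b = v a b) ∧
      (∑ t, ν t t t = ∑ t, min (w t) (v t t)) ∧
      (∑ t, ∑ t', |w t * (if t = t' then 1 else 0) - v t t'|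
        = 2 - 2 * ∑ t, min (w t) (v t t)) := by
  classical
  set m : T → ℝ := fun t => min (w t) (v t t) with hm
  set α : ℝ := ∑ t, m t with hα
  have hm0 : ∀ t, 0 ≤ m t := fun t => le_min (hw0 t) (hv0 t t)
  have hmw : ∀ t, m t ≤ w t := fun t => min_le_left _ _
  have hmv : ∀ t, m t ≤ v t t := fun t => min_le_right _ _
  set M : T → T → ℝ := fun a b => if a = b then m a else 0 with hM
  have hMv : ∀ a b, M a b ≤ v a b := by
    intro a b
    by_cases h : a = b
    · subst h; simpa [hM] using hmv a
    · simp [hM, h, hv0 a b]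
  have hsumM : ∑ a, ∑ b, M a b = α := by
    simp [hM, hα]
  have hsum_vM : ∑ a, ∑ b, (v a b - M a b) = 1 - α := by
    simp only [Finset.sum_sub_distrib]
    rw [hv1, hsumM]
  have hsum_wm : ∑ t, (w t - m t) = 1 - α := by
    simp only [Finset.sum_sub_distrib]
    rw [hw1, hα]
  have hα1 : α ≤ 1 := by
    rw [← hw1, hα]; exact Finset.sum_le_sum fun t _ => hmw t
  set r : ℝ := if α = 1 then 0 else (1 - α)⁻¹ with hr
  have hr0 : 0 ≤ r := by
    rw [hr]; split
    · exact le_refl 0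
    · exact inv_nonneg.2 (by linarith)
  have hdegW : α = 1 → ∀ t, w t - m t = 0 := by
    intro h t
    have h0 : ∑ t, (w t - m t) = 0 := by rw [hsum_wm, h]; ring
    exact (Finset.sum_eq_zero_iff_of_nonneg
      (fun t _ => sub_nonneg.2 (hmw t))).1 h0 t (Finset.mem_univ t)
  have hdegV : α = 1 → ∀ a b, v a b - M a b = 0 := by
    intro h a b
    have h0 : ∑ a, ∑ b, (v a b - M a b) = 0 := by rw [hsum_vM, h]; ring
    have h1 := (Finset.sum_eq_zero_iff_of_nonneg
      (fun a _ => Finset.sum_nonneg fun b _ => sub_nonneg.2 (hMv a b))).1 h0 a (Finset.mem_univ a)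
    exact (Finset.sum_eq_zero_iff_of_nonneg
      (fun b _ => sub_nonneg.2 (hMv a b))).1 h1 b (Finset.mem_univ b)
  refine ⟨fun t a b => (if a = t ∧ b = t then m t else 0)
      + r * (w t - m t) * (v a b - M a b), ?_, ?_, ?_, ?_, ?_⟩
  · intro t a b
    apply add_nonneg
    · split
      · exact hm0 t
      · exact le_refl 0
    · exact mul_nonneg (mul_nonneg hr0 (sub_nonneg.2 (hmw t))) (sub_nonneg.2 (hMv a b))
  · intro t
    have h1 : ∑ a, ∑ b, (if a = t ∧ b = t then m t else 0) = m t := by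
      simp [ite_and]
    rw [show (∑ a, ∑ b, ((if a = t ∧ b = t then m t else 0)
        + r * (w t - m t) * (v a b - M a b)))
        = (∑ a, ∑ b, (if a = t ∧ b = t then m t else 0))
          + r * (w t - m t) * (∑ a, ∑ b, (v a b - M a b)) from by
      simp [Finset.sum_add_distrib, Finset.mul_sum, Finset.sum_sub_distrib, mul_sub]]
    rw [h1, hsum_vM]
    by_cases hc : α = 1
    · have := hdegW hc t
      rw [hr, if_pos hc]
      linarith
    · have hne : (1 : ℝ) - α ≠ 0 := sub_ne_zero.2 (Ne.symm hc)
      have hrv : r * (1 - α) = 1 := by rw [hr, if_neg hc]; exact inv_mul_cancel₀ hne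
      linear_combination (w t - m t) * hrv
  · intro a b
    have h1 : ∑ t, (if a = t ∧ b = t then m t else 0) = M a b := by
      by_cases h : a = b
      · subst h
        simp [hM, eq_comm]
      · rw [hM]
        simp only [h, if_false]
        apply Finset.sum_eq_zero
        intro t _
        rw [if_neg]
        rintro ⟨h1, h2⟩
        exact h (h1.trans h2.symm)
    rw [show (∑ t, ((if a = t ∧ b = t then m t else 0)
        + r * (w t - m t) * (v a b - M a b)))
        = (∑ t, (if a = t ∧ b = t then m t else 0))
          + r * (∑ t, (w t - m t)) * (v a b - M a b) from by
      rw [Finset.sum_add_distrib, Finset.mul_sum, Finset.sum_mul]]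
    rw [h1, hsum_wm]
    by_cases hc : α = 1
    · have := hdegV hc a b
      rw [hr, if_pos hc]
      linarith
    · have hne : (1 : ℝ) - α ≠ 0 := sub_ne_zero.2 (Ne.symm hc)
      have hrv : r * (1 - α) = 1 := by rw [hr, if_neg hc]; exact inv_mul_cancel₀ hne
      linear_combination (v a b - M a b) * hrv
  · have key : ∀ t, (if t = t ∧ t = t then m t else 0)
        + r * (w t - m t) * (v t t - M t t) = m t := by
      intro t
      have hMtt : M t t = m t := by simp [hM]
      rw [if_pos ⟨rfl, rfl⟩, hMtt]
      rcases min_choice (w t) (v t t) with h | h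
      · have : w t - m t = 0 := by rw [hm]; simp only; linarith [h.symm.le, h.le]
        rw [this]; ring
      · have : v t t - m t = 0 := by rw [hm]; simp only; linarith [h.symm.le, h.le]
        rw [this]; ring
    rw [Finset.sum_congr rfl fun t _ => key t]
  · have habs : ∀ t t', |w t * (if t = t' then 1 else 0) - v t t'|
        = (if t = t' then (w t + v t t - 2 * m t) else v t t') := by
      intro t t'
      by_cases h : t = t'
      · subst h
        rw [if_pos rfl, if_pos rfl, mul_one]
        rcases le_total (w t) (v t t) with h | h
        · rw [abs_of_nonpos (by linarith), hm]; simp only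
          rw [min_eq_left h]; ring
        · rw [abs_of_nonneg (by linarith), hm]; simp only
          rw [min_eq_right h]; ring
      · rw [if_neg h, if_neg h, mul_zero, zero_sub, abs_neg, abs_of_nonneg (hv0 t t')]
    rw [Finset.sum_congr rfl fun t _ => Finset.sum_congr rfl fun t' _ => habs t t']
    have hinner : ∀ t, ∑ t', (if t = t' then (w t + v t t - 2 * m t) else v t t')
        = (∑ t', v t t') + (w t - 2 * m t) := by
      intro t
      have step : ∀ t', (if t = t' then (w t + v t t - 2 * m t) else v t t')
          = v t t' + (if t = t' then (w t + v t t - 2 * m t) - v t t' else 0) := by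
        intro t'
        by_cases h : t = t'
        · subst h; rw [if_pos rfl, if_pos rfl]; ring
        · rw [if_neg h, if_neg h]; ring
      rw [Finset.sum_congr rfl fun t' _ => step t', Finset.sum_add_distrib,
        Finset.sum_ite_eq]
      simp only [Finset.mem_univ, if_true]
      ring
    rw [Finset.sum_congr rfl fun t _ => hinner t, Finset.sum_add_distrib, hv1]
    rw [show (∑ t, (w t - 2 * m t)) = (∑ t, w t) - 2 * ∑ t, m t from by
      simp [Finset.sum_sub_distrib, Finset.mul_sum]]
    rw [hw1]
    ring

/-- Coupling of a protocol transcript with its simulation. Given a pmf `PXY` on `𝒳 × 𝒴`,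
a kernel `W` giving the pmf of the transcript `Π` on `𝒯` for each `(x,y)`, and a kernel
`V` giving the joint pmf of the simulated views `(Π_X, Π_Y)` on `𝒯 × 𝒯` for each `(x,y)`,
there is a joint pmf `μ` of `(Π, Π_X, Π_Y, X, Y)` whose `(Π, X, Y)`-marginal is
`PXY(x,y)·W(τ|x,y)`, whose `(Π_X, Π_Y, X, Y)`-marginal is `P₂`, and under which
`μ({Π = Π_X = Π_Y}) = 1 − d(P₁, P₂)`. -/
theorem coupling_of_simulation
    {T X Y : Type*} [Fintype T] [Fintype X] [Fintype Y]
    (PXY : X → Y → ℝ)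
    (hXY0 : ∀ x y, 0 ≤ PXY x y) (hXY1 : ∑ x, ∑ y, PXY x y = 1)
    (W : X → Y → T → ℝ)
    (hW0 : ∀ x y t, 0 ≤ W x y t) (hW1 : ∀ x y, ∑ t, W x y t = 1)
    (V : X → Y → T → T → ℝ)
    (hV0 : ∀ x y t t', 0 ≤ V x y t t') (hV1 : ∀ x y, ∑ t, ∑ t', V x y t t' = 1)
    (P₁ P₂ : T → T → X → Y → ℝ)
    (hP₁ : ∀ t t' x y, P₁ t t' x y = PXY x y * W x y t * (if t = t' then 1 else 0))
    (hP₂ : ∀ t t' x y, P₂ t t' x y = PXY x y * V x y t t') :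
    ∃ μ : T → T → T → X → Y → ℝ,
      (∀ t a b x y, 0 ≤ μ t a b x y) ∧
      (∑ t, ∑ a, ∑ b, ∑ x, ∑ y, μ t a b x y = 1) ∧
      (∀ t x y, ∑ a, ∑ b, μ t a b x y = PXY x y * W x y t) ∧
      (∀ a b x y, ∑ t, μ t a b x y = P₂ a b x y) ∧
      (∑ t, ∑ x, ∑ y, μ t t t x y)
        = 1 - (∑ t, ∑ t', ∑ x, ∑ y, |P₁ t t' x y - P₂ t t' x y|) / 2 := by
  classical
  choose ν hν0 hνA hνB hνdiag hνTV using fun (x : X) (y : Y) =>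
    coupling_aux (W x y) (V x y) (hW0 x y) (hW1 x y) (hV0 x y) (hV1 x y)
  have swap3 : ∀ (f : T → X → Y → ℝ),
      (∑ t, ∑ x, ∑ y, f t x y) = ∑ x, ∑ y, ∑ t, f t x y := by
    intro f
    rw [Finset.sum_comm]
    exact Finset.sum_congr rfl fun x _ => Finset.sum_comm
  have swap4 : ∀ (f : T → T → X → Y → ℝ),
      (∑ a, ∑ b, ∑ x, ∑ y, f a b x y) = ∑ x, ∑ y, ∑ a, ∑ b, f a b x y := by
    intro f
    calc (∑ a, ∑ b, ∑ x, ∑ y, f a b x y)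
        = ∑ a, ∑ x, ∑ y, ∑ b, f a b x y := by
          exact Finset.sum_congr rfl fun a _ => by
            rw [Finset.sum_comm]
            exact Finset.sum_congr rfl fun x _ => Finset.sum_comm
      _ = ∑ x, ∑ a, ∑ y, ∑ b, f a b x y := Finset.sum_comm
      _ = ∑ x, ∑ y, ∑ a, ∑ b, f a b x y :=
          Finset.sum_congr rfl fun x _ => Finset.sum_comm
  refine ⟨fun t a b x y => PXY x y * ν x y t a b, ?_, ?_, ?_, ?_, ?_⟩
  · intro t a b x y
    exact mul_nonneg (hXY0 x y) (hν0 x y t a b)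
  · have h1 : ∀ t x y, (∑ a, ∑ b, PXY x y * ν x y t a b) = PXY x y * W x y t := by
      intro t x y
      rw [show (∑ a, ∑ b, PXY x y * ν x y t a b)
          = PXY x y * ∑ a, ∑ b, ν x y t a b from by simp [Finset.mul_sum]]
      rw [hνA x y t]
    calc (∑ t, ∑ a, ∑ b, ∑ x, ∑ y, PXY x y * ν x y t a b)
        = ∑ t, ∑ x, ∑ y, ∑ a, ∑ b, PXY x y * ν x y t a b :=
          Finset.sum_congr rfl fun t _ => swap4 _
      _ = ∑ t, ∑ x, ∑ y, PXY x y * W x y t := by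
          exact Finset.sum_congr rfl fun t _ => Finset.sum_congr rfl fun x _ =>
            Finset.sum_congr rfl fun y _ => h1 t x y
      _ = ∑ x, ∑ y, ∑ t, PXY x y * W x y t := swap3 _
      _ = ∑ x, ∑ y, PXY x y := by
          refine Finset.sum_congr rfl fun x _ => Finset.sum_congr rfl fun y _ => ?_
          rw [← Finset.mul_sum, hW1, mul_one]
      _ = 1 := hXY1
  · intro t x y
    rw [show (∑ a, ∑ b, PXY x y * ν x y t a b)
        = PXY x y * ∑ a, ∑ b, ν x y t a b from by simp [Finset.mul_sum]]
    rw [hνA x y t]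
  · intro a b x y
    rw [← Finset.mul_sum, hνB x y a b, hP₂]
  · have hLHS : (∑ t, ∑ x, ∑ y, PXY x y * ν x y t t t)
        = ∑ x, ∑ y, PXY x y * ∑ t, min (W x y t) (V x y t t) := by
      rw [swap3]
      refine Finset.sum_congr rfl fun x _ => Finset.sum_congr rfl fun y _ => ?_
      rw [← Finset.mul_sum, hνdiag x y]
    have hTV : (∑ t, ∑ t', ∑ x, ∑ y, |P₁ t t' x y - P₂ t t' x y|)
        = ∑ x, ∑ y, PXY x y * (2 - 2 * ∑ t, min (W x y t) (V x y t t)) := by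
      rw [swap4]
      refine Finset.sum_congr rfl fun x _ => Finset.sum_congr rfl fun y _ => ?_
      rw [← hνTV x y, Finset.mul_sum]
      refine Finset.sum_congr rfl fun t _ => ?_
      rw [Finset.mul_sum]
      refine Finset.sum_congr rfl fun t' _ => ?_
      rw [hP₁, hP₂, show PXY x y * W x y t * (if t = t' then 1 else 0)
          - PXY x y * V x y t t'
          = PXY x y * ((W x y t * if t = t' then 1 else 0) - V x y t t') from by ring,
        abs_mul, abs_of_nonneg (hXY0 x y)]
    rw [hLHS, hTV]
    have hexp : (∑ x, ∑ y, PXY x y * (2 - 2 * ∑ t, min (W x y t) (V x y t t)))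
        = 2 * (∑ x, ∑ y, PXY x y)
          - 2 * ∑ x, ∑ y, PXY x y * ∑ t, min (W x y t) (V x y t t) := by
      rw [Finset.mul_sum, Finset.mul_sum, ← Finset.sum_sub_distrib]
      refine Finset.sum_congr rfl fun x _ => ?_
      rw [Finset.mul_sum, Finset.mul_sum, ← Finset.sum_sub_distrib]
      exact Finset.sum_congr rfl fun y _ => by ring
    rw [hexp, hXY1]
    ring
end

section
/- Let 𝒯, 𝒳, 𝒴 be finite sets, g : 𝒳×𝒴 → 𝒯 a function, and P_XY a pmf on 𝒳×𝒴. Let P₁ be the pmf on 𝒯×𝒯×𝒳×𝒴 of (g(X,Y), g(X,Y), X, Y) where (X,Y) ~ P_XY, i.e. P₁(τ,τ',x,y) = P_XY(x,y)·1[τ = τ' = g(x,y)]. Let P₂ be any pmf on 𝒯×𝒯×𝒳×𝒴 whose (𝒳×𝒴)-marginal equals P_XY. Then d(P₁, P₂) = 1 − P₂({(τ,τ',x,y) : τ = τ' = g(x,y)}). -/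
open scoped Classical

/-- For a deterministic protocol computing `g(X,Y)`, the variational distance between the
true view `P₁` of `(g(X,Y), g(X,Y), X, Y)` and any candidate view `P₂` with the correct
`(𝒳 × 𝒴)`-marginal equals one minus the probability under `P₂` that both transcripts are
correct: `d(P₁,P₂) = 1 − P₂({(τ,τ',x,y) : τ = τ' = g(x,y)})`. -/
theorem tv_distance_deterministic_protocol
    {T X Y : Type*} [Fintype T] [Fintype X] [Fintype Y] [DecidableEq T]
    (g : X → Y → T)
    (PXY : X → Y → ℝ)
    (hXY0 : ∀ x y, 0 ≤ PXY x y) (hXY1 : ∑ x, ∑ y, PXY x y = 1)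
    (P₁ : T → T → X → Y → ℝ)
    (hP₁ : ∀ t t' x y, P₁ t t' x y = if t = g x y ∧ t' = g x y then PXY x y else 0)
    (P₂ : T → T → X → Y → ℝ)
    (hP₂0 : ∀ t t' x y, 0 ≤ P₂ t t' x y)
    (hP₂1 : ∑ t, ∑ t', ∑ x, ∑ y, P₂ t t' x y = 1)
    (hmarg : ∀ x y, ∑ t, ∑ t', P₂ t t' x y = PXY x y) :
    (∑ t, ∑ t', ∑ x, ∑ y, |P₁ t t' x y - P₂ t t' x y|) / 2
      = 1 - ∑ t, ∑ t', ∑ x, ∑ y,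
          (if t = g x y ∧ t' = g x y then P₂ t t' x y else 0) := by
  have swap : ∀ (f : T → T → X → Y → ℝ),
      (∑ t, ∑ t', ∑ x, ∑ y, f t t' x y) = ∑ x, ∑ y, ∑ t, ∑ t', f t t' x y := by
    intro f
    calc (∑ t, ∑ t', ∑ x, ∑ y, f t t' x y)
        = ∑ t, ∑ x, ∑ t', ∑ y, f t t' x y :=
          Finset.sum_congr rfl fun t _ => Finset.sum_comm
      _ = ∑ x, ∑ t, ∑ t', ∑ y, f t t' x y := Finset.sum_comm
      _ = ∑ x, ∑ t, ∑ y, ∑ t', f t t' x y :=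
          Finset.sum_congr rfl fun x _ => Finset.sum_congr rfl fun t _ => Finset.sum_comm
      _ = ∑ x, ∑ y, ∑ t, ∑ t', f t t' x y :=
          Finset.sum_congr rfl fun x _ => Finset.sum_comm
  have hle : ∀ x y, P₂ (g x y) (g x y) x y ≤ PXY x y := by
    intro x y
    rw [← hmarg x y]
    calc P₂ (g x y) (g x y) x y
        ≤ ∑ t', P₂ (g x y) t' x y :=
          Finset.single_le_sum (f := fun t' => P₂ (g x y) t' x y) (fun i _ => hP₂0 _ _ _ _) (Finset.mem_univ _)
      _ ≤ ∑ t, ∑ t', P₂ t t' x y :=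
          Finset.single_le_sum (f := fun t => ∑ t', P₂ t t' x y) (fun i _ => Finset.sum_nonneg fun j _ => hP₂0 _ _ _ _)
            (Finset.mem_univ _)
  have key : ∀ t t' x y, |P₁ t t' x y - P₂ t t' x y|
      = ((if t = g x y ∧ t' = g x y then PXY x y else 0)
          - 2 * (if t = g x y ∧ t' = g x y then P₂ t t' x y else 0)) + P₂ t t' x y := by
    intro t t' x y
    rw [hP₁]
    by_cases h : t = g x y ∧ t' = g x y
    · simp only [if_pos h]
      have := hle x y
      obtain ⟨h1, h2⟩ := h
      subst h1; subst h2
      rw [abs_of_nonneg (by linarith)]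
      ring
    · simp only [if_neg h]
      rw [abs_of_nonpos (by linarith [hP₂0 t t' x y])]
      ring
  have hdiag : (∑ t, ∑ t', ∑ x, ∑ y,
      (if t = g x y ∧ t' = g x y then PXY x y else 0)) = 1 := by
    rw [swap, ← hXY1]
    refine Finset.sum_congr rfl fun x _ => Finset.sum_congr rfl fun y _ => ?_
    simp [ite_and, Finset.sum_ite_eq']
  simp_rw [key]
  simp_rw [Finset.sum_add_distrib, Finset.sum_sub_distrib, ← Finset.mul_sum]
  rw [hP₂1, hdiag]
  ring
end

section
/- (Leftover hash lemma with side information.) Let 𝒳, 𝒵, 𝒱, 𝒦 be finite sets, let (X, V, Z) be random variables with joint pmf P_XVZ on 𝒳×𝒱×𝒵, and let F be a 2-universal family of functions f : 𝒳 → 𝒦. Let S be uniformly distributed on F, independent of (X, V, Z), and set K_S = f_S(X). Then for every pmf Q_Z on 𝒵 with supp(P_Z) ⊆ supp(Q_Z): E_S[ d(P_{K_S V Z}, P_unif × P_{VZ}) ] ≤ (1/2)·√( |𝒦|·|𝒱|·2^{−H_min(P_XZ | Q_Z)} ), where P_unif is the uniform pmf on 𝒦 and P_{K_S V Z} is the joint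 pmf of (K_S, V, Z) for fixed seed S. -/
open scoped Classical

private lemma cs_abs_step {α : Type*} [Fintype α] (D R : α → ℝ)
    (hR : ∀ a, 0 ≤ R a) (hD : ∀ a, R a = 0 → D a = 0) :
    ∑ a, |D a| ≤ Real.sqrt (∑ a, R a) *
      Real.sqrt (∑ a, if R a = 0 then 0 else (D a) ^ 2 / R a) := by
  have h := Real.sum_mul_le_sqrt_mul_sqrt Finset.univ
      (fun a => Real.sqrt (R a))
      (fun a => if R a = 0 then 0 else |D a| / Real.sqrt (R a))
  have h1 : ∀ a : α, Real.sqrt (R a) *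
      (if R a = 0 then 0 else |D a| / Real.sqrt (R a)) = |D a| := by
    intro a
    by_cases hz : R a = 0
    · simp [hz, hD a hz]
    · have hpos : 0 < R a := lt_of_le_of_ne (hR a) (Ne.symm hz)
      have hs : Real.sqrt (R a) ≠ 0 := by positivity
      rw [if_neg hz]
      field_simp
  have h2 : ∀ a : α, (Real.sqrt (R a)) ^ 2 = R a := fun a => Real.sq_sqrt (hR a)
  have h3 : ∀ a : α, (if R a = 0 then 0 else |D a| / Real.sqrt (R a)) ^ 2
      = if R a = 0 then 0 else (D a) ^ 2 / R a := by
    intro a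
    by_cases hz : R a = 0
    · simp [hz]
    · rw [if_neg hz, if_neg hz, div_pow, sq_abs, Real.sq_sqrt (hR a)]
  calc ∑ a, |D a| = ∑ a, Real.sqrt (R a) *
        (if R a = 0 then 0 else |D a| / Real.sqrt (R a)) := by
        exact (Finset.sum_congr rfl (fun a _ => (h1 a).symm))
    _ ≤ _ := by
        refine h.trans_eq ?_
        congr 1
        · congr 1; exact Finset.sum_congr rfl fun a _ => h2 a
        · congr 1; exact Finset.sum_congr rfl fun a _ => h3 a

private lemma sqrt_jensen {ι : Type*} [Fintype ι] (a : ι → ℝ) (ha : ∀ i, 0 ≤ a i) :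
    ∑ i, Real.sqrt (a i) ≤ Real.sqrt (Fintype.card ι : ℝ) * Real.sqrt (∑ i, a i) := by
  have h := Real.sum_sqrt_mul_sqrt_le (f := a) (g := fun _ => (1:ℝ)) Finset.univ ha (fun _ => zero_le_one)
  simpa [mul_comm, Finset.card_univ] using h


private lemma sum_swap4 {A B C D : Type*} [Fintype A] [Fintype B] [Fintype C] [Fintype D]
    (t : A → B → C → D → ℝ) :
    ∑ a, ∑ b, ∑ c, ∑ d, t a b c d = ∑ c, ∑ d, ∑ a, ∑ b, t a b c d := by
  calc ∑ a, ∑ b, ∑ c, ∑ d, t a b c d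
      = ∑ a, ∑ c, ∑ b, ∑ d, t a b c d :=
        Finset.sum_congr rfl fun a _ => Finset.sum_comm
    _ = ∑ c, ∑ a, ∑ b, ∑ d, t a b c d := Finset.sum_comm
    _ = ∑ c, ∑ a, ∑ d, ∑ b, t a b c d :=
        Finset.sum_congr rfl fun c _ => Finset.sum_congr rfl fun a _ => Finset.sum_comm
    _ = ∑ c, ∑ d, ∑ a, ∑ b, t a b c d :=
        Finset.sum_congr rfl fun c _ => Finset.sum_comm

private lemma collision_bound {X K ι : Type*} [Fintype X] [Fintype K] [Fintype ι]
    [DecidableEq K] (p : X → ℝ) (hp : ∀ x, 0 ≤ p x) (f : ι → X → K)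
    (hK : 0 < (Fintype.card K : ℝ))
    (huniv : ∀ x x' : X, x ≠ x' →
      (∑ i, if f i x = f i x' then (1 : ℝ) else 0)
        ≤ (Fintype.card ι : ℝ) / (Fintype.card K : ℝ)) :
    ∑ i : ι, ∑ k : K, ((∑ x, if f i x = k then p x else 0)
        - (1 / (Fintype.card K : ℝ)) * ∑ x, p x) ^ 2
      ≤ (Fintype.card ι : ℝ) * ∑ x, (p x) ^ 2 := by
  set nK : ℝ := (Fintype.card K : ℝ) with hnK
  set nI : ℝ := (Fintype.card ι : ℝ) with hnI
  set u : ℝ := 1 / nK with hu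
  set S : ℝ := ∑ x, p x with hS
  have hKu : nK * u = 1 := by
    rw [hu]; field_simp
  -- marginal: sum over k of Pi is S
  have hmarg : ∀ i : ι, ∑ k : K, (∑ x, if f i x = k then p x else 0) = S := by
    intro i
    rw [Finset.sum_comm]
    exact Finset.sum_congr rfl fun x _ => by simp
  -- expand square
  have hexp : ∀ i : ι,
      ∑ k : K, ((∑ x, if f i x = k then p x else 0) - u * S) ^ 2
      = (∑ k : K, (∑ x, if f i x = k then p x else 0) ^ 2) - u * S ^ 2 := by
    intro i
    have : ∀ k : K, ((∑ x, if f i x = k then p x else 0) - u * S) ^ 2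
        = (∑ x, if f i x = k then p x else 0) ^ 2
          - 2 * u * S * (∑ x, if f i x = k then p x else 0) + u ^ 2 * S ^ 2 := by
      intro k; ring
    rw [Finset.sum_congr rfl fun k _ => this k]
    rw [Finset.sum_add_distrib, Finset.sum_sub_distrib, ← Finset.mul_sum, hmarg i,
      Finset.sum_const, Finset.card_univ, nsmul_eq_mul, ← hnK]
    linear_combination (u * S ^ 2) * hKu
  -- collision sum
  have hsq : ∀ i : ι, ∑ k : K, (∑ x, if f i x = k then p x else 0) ^ 2
      = ∑ x, ∑ x', (if f i x = f i x' then p x * p x' else 0) := by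
    intro i
    have h1 : ∀ k : K, (∑ x, if f i x = k then p x else 0) ^ 2
        = ∑ x, ∑ x', (if f i x = k then p x else 0) * (if f i x' = k then p x' else 0) := by
      intro k
      rw [sq, Finset.sum_mul_sum]
    rw [Finset.sum_congr rfl fun k _ => h1 k, Finset.sum_comm]
    refine Finset.sum_congr rfl fun x _ => ?_
    rw [Finset.sum_comm]
    refine Finset.sum_congr rfl fun x' _ => ?_
    have h2 : ∀ k : K, (if f i x = k then p x else 0) * (if f i x' = k then p x' else 0)
        = if f i x = k then (if f i x = f i x' then p x * p x' else 0) else 0 := by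
      intro k
      by_cases h1 : f i x = k
      · rw [if_pos h1]
        by_cases h2 : f i x' = k
        · rw [if_pos h2, if_pos (h1.trans h2.symm), if_pos h1]
        · rw [if_neg h2, mul_zero,
            if_neg (show ¬ f i x = f i x' from fun h => h2 (h ▸ h1))]
          simp
      · rw [if_neg h1, zero_mul, if_neg h1]
    rw [Finset.sum_congr rfl fun k _ => h2 k]
    simp
  -- sum over seeds of collision terms
  have hcoll : ∑ i : ι, ∑ x, ∑ x', (if f i x = f i x' then p x * p x' else 0)
      ≤ nI * S ^ 2 * u + nI * ∑ x, (p x) ^ 2 := by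
    rw [Finset.sum_comm]
    have hswap : ∀ x : X, ∑ i : ι, ∑ x', (if f i x = f i x' then p x * p x' else 0)
        = ∑ x', ∑ i : ι, (if f i x = f i x' then p x * p x' else 0) := by
      intro x; exact Finset.sum_comm
    rw [Finset.sum_congr rfl fun x _ => hswap x]
    have hterm : ∀ x x' : X, ∑ i : ι, (if f i x = f i x' then p x * p x' else 0)
        ≤ nI * u * (p x * p x') + (if x = x' then nI * (p x)^2 else 0) := by
      intro x x'
      have heq : ∑ i : ι, (if f i x = f i x' then p x * p x' else 0)
          = (∑ i : ι, if f i x = f i x' then (1:ℝ) else 0) * (p x * p x') := by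
        rw [Finset.sum_mul]
        exact Finset.sum_congr rfl fun i _ => by by_cases h : f i x = f i x' <;> simp [h]
      rw [heq]
      by_cases hxx : x = x'
      · subst hxx
        have h1 : (∑ i : ι, if f i x = f i x then (1:ℝ) else 0) = nI := by
          simp [Finset.card_univ, hnI]
        rw [h1, if_pos rfl]
        have : 0 ≤ nI * u * (p x * p x) := by
          apply mul_nonneg (mul_nonneg (by positivity) (by positivity)) (mul_nonneg (hp x) (hp x))
        nlinarith [sq_nonneg (p x)]
      · rw [if_neg hxx, add_zero]
        have h1 := huniv x x' hxx
        have h2 : (Fintype.card ι : ℝ) / (Fintype.card K : ℝ) = nI * u := by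
          rw [hu, mul_one_div]
        have hpp : 0 ≤ p x * p x' := mul_nonneg (hp x) (hp x')
        calc (∑ i : ι, if f i x = f i x' then (1:ℝ) else 0) * (p x * p x')
            ≤ (nI * u) * (p x * p x') := by
              apply mul_le_mul_of_nonneg_right _ hpp
              rw [← h2]; exact h1
          _ = nI * u * (p x * p x') := rfl
    calc ∑ x, ∑ x', ∑ i : ι, (if f i x = f i x' then p x * p x' else 0)
        ≤ ∑ x, ∑ x', (nI * u * (p x * p x') + (if x = x' then nI * (p x)^2 else 0)) := by
          apply Finset.sum_le_sum; intro x _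
          apply Finset.sum_le_sum; intro x' _
          exact hterm x x'
      _ = nI * S ^ 2 * u + nI * ∑ x, (p x) ^ 2 := by
          rw [Finset.sum_congr rfl fun x (_ : x ∈ Finset.univ) => Finset.sum_add_distrib]
          rw [Finset.sum_add_distrib]
          congr 1
          · calc ∑ x, ∑ x', nI * u * (p x * p x')
                = nI * u * ∑ x, ∑ x', p x * p x' := by
                  rw [Finset.mul_sum]
                  exact Finset.sum_congr rfl fun x _ => by rw [Finset.mul_sum]
              _ = nI * u * (S * S) := by
                  rw [← Finset.sum_mul_sum, ← hS]
              _ = nI * S ^ 2 * u := by ring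
          · rw [Finset.mul_sum]
            refine Finset.sum_congr rfl fun x _ => ?_
            simp
  -- combine
  have hfinal : ∑ i : ι, ∑ k : K, ((∑ x, if f i x = k then p x else 0) - u * S) ^ 2
      ≤ nI * ∑ x, (p x) ^ 2 := by
    rw [Finset.sum_congr rfl fun i _ => hexp i, Finset.sum_sub_distrib, Finset.sum_const,
      Finset.card_univ, nsmul_eq_mul, ← hnI]
    have h2 : ∑ i : ι, ∑ k : K, (∑ x, if f i x = k then p x else 0) ^ 2
        ≤ nI * S ^ 2 * u + nI * ∑ x, (p x) ^ 2 := by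
      calc ∑ i : ι, ∑ k : K, (∑ x, if f i x = k then p x else 0) ^ 2
          = ∑ i : ι, ∑ x, ∑ x', (if f i x = f i x' then p x * p x' else 0) :=
            Finset.sum_congr rfl fun i _ => hsq i
        _ ≤ _ := hcoll
    have h3 : nI * (u * S ^ 2) = nI * S ^ 2 * u := by ring
    linarith [h2]
  exact hfinal

/-- **Leftover hash lemma with side information.** Let `(X, V, Z)` have joint pmf `P` on
finite sets, let `f : ι → 𝒳 → 𝒦` be a 2-universal family of hash functions indexed by the
uniformly random seed `i : ι` (independent of `(X,V,Z)`), and let `K_i = f i X`. Then for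
any pmf `QZ` whose support contains that of `P_Z`, and with `H` the conditional
min-entropy `H_min(P_XZ | QZ) = min_{(x,z) : P_XZ(x,z)>0} −log₂(P_XZ(x,z)/QZ(z))`,
the average over seeds of `d(P_{K_i V Z}, P_unif × P_{VZ})` is at most
`(1/2)·√(|𝒦|·|𝒱|·2^{−H})`. -/
theorem leftover_hash_lemma
    {X V Z K ι : Type*} [Fintype X] [Fintype V] [Fintype Z] [Fintype K] [Fintype ι]
    [Nonempty ι] [DecidableEq K]
    (P : X → V → Z → ℝ)
    (hP0 : ∀ x v z, 0 ≤ P x v z) (hP1 : ∑ x, ∑ v, ∑ z, P x v z = 1)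
    (f : ι → X → K)
    (huniv : ∀ x x' : X, x ≠ x' →
      (∑ i, if f i x = f i x' then (1 : ℝ) else 0) / (Fintype.card ι : ℝ)
        ≤ 1 / (Fintype.card K : ℝ))
    (QZ : Z → ℝ) (hQ0 : ∀ z, 0 ≤ QZ z) (hQ1 : ∑ z, QZ z = 1)
    (hsupp : ∀ z, 0 < ∑ x, ∑ v, P x v z → 0 < QZ z)
    (H : ℝ)
    (hH : IsLeast {r : ℝ | ∃ x z, 0 < ∑ v, P x v z ∧
            r = - Real.logb 2 ((∑ v, P x v z) / QZ z)} H) :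
    (∑ i : ι, (∑ k, ∑ v, ∑ z,
        |(∑ x, if f i x = k then P x v z else 0)
          - (1 / (Fintype.card K : ℝ)) * ∑ x, P x v z|) / 2)
      / (Fintype.card ι : ℝ)
    ≤ (1 / 2) * Real.sqrt
        ((Fintype.card K : ℝ) * (Fintype.card V : ℝ) * (2 : ℝ) ^ (-H)) := by
  classical
  -- nonemptiness of the index types
  have hXne : Nonempty X := by
    rcases isEmpty_or_nonempty X with h | h
    · exfalso; haveI := h; simp at hP1
    · exact h
  have hVne : Nonempty V := by
    rcases isEmpty_or_nonempty V with h | h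
    · exfalso; haveI := h; simp at hP1
    · exact h
  have hKne : Nonempty K := ⟨f (Classical.arbitrary ι) (Classical.arbitrary X)⟩
  have hnK : (0 : ℝ) < (Fintype.card K : ℝ) := by exact_mod_cast Fintype.card_pos
  have hnV : (0 : ℝ) < (Fintype.card V : ℝ) := by exact_mod_cast Fintype.card_pos
  have hnI : (0 : ℝ) < (Fintype.card ι : ℝ) := by exact_mod_cast Fintype.card_pos
  -- if QZ z = 0 then all probabilities at z vanish
  have hQzero : ∀ z, QZ z = 0 → ∀ x v, P x v z = 0 := by
    intro z hz x v
    have hnotpos : ¬ (0 < ∑ x, ∑ v, P x v z) := by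
      intro h
      have := hsupp z h
      rw [hz] at this
      exact lt_irrefl 0 this
    have hzero : ∑ x, ∑ v, P x v z = 0 :=
      le_antisymm (not_lt.mp hnotpos)
        (Finset.sum_nonneg fun x _ => Finset.sum_nonneg fun v _ => hP0 x v z)
    have h1 := (Finset.sum_eq_zero_iff_of_nonneg
      (fun x _ => Finset.sum_nonneg fun v _ => hP0 x v z)).mp hzero x (Finset.mem_univ x)
    exact (Finset.sum_eq_zero_iff_of_nonneg (fun v _ => hP0 x v z)).mp h1 v (Finset.mem_univ v)
  -- min-entropy bound
  have hmin : ∀ x z, (∑ v, P x v z) ≤ QZ z * (2 : ℝ) ^ (-H) := by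
    intro x z
    by_cases hp : 0 < ∑ v, P x v z
    · have hq : 0 < QZ z := by
        apply hsupp z
        refine lt_of_lt_of_le hp ?_
        exact Finset.single_le_sum
          (fun x' _ => Finset.sum_nonneg fun v _ => hP0 x' v z) (Finset.mem_univ x)
      have hmem : H ≤ - Real.logb 2 ((∑ v, P x v z) / QZ z) := hH.2 ⟨x, z, hp, rfl⟩
      have hrq : 0 < (∑ v, P x v z) / QZ z := div_pos hp hq
      have hlog : Real.logb 2 ((∑ v, P x v z) / QZ z) ≤ -H := by linarith
      have hpow : (2 : ℝ) ^ (Real.logb 2 ((∑ v, P x v z) / QZ z)) ≤ (2 : ℝ) ^ (-H) :=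
        (Real.rpow_le_rpow_left_iff (by norm_num : (1:ℝ) < 2)).mpr hlog
      rw [Real.rpow_logb (by norm_num) (by norm_num) hrq] at hpow
      have := (div_le_iff₀ hq).mp hpow
      linarith [this]
    · have h0 : ∑ v, P x v z = 0 :=
        le_antisymm (not_lt.mp hp) (Finset.sum_nonneg fun v _ => hP0 x v z)
      rw [h0]
      exact mul_nonneg (hQ0 z) (Real.rpow_nonneg (by norm_num) _)
  -- abbreviations
  set D : ι → K → V → Z → ℝ := fun i k v z =>
    (∑ x, if f i x = k then P x v z else 0)
      - (1 / (Fintype.card K : ℝ)) * ∑ x, P x v z with hD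
  set T : ι → ℝ := fun i => ∑ k, ∑ v, ∑ z,
    (if QZ z = 0 then 0 else (D i k v z) ^ 2 * (Fintype.card V : ℝ) / QZ z) with hT
  -- T is nonnegative
  have hTnn : ∀ i, 0 ≤ T i := by
    intro i
    refine Finset.sum_nonneg fun k _ => Finset.sum_nonneg fun v _ =>
      Finset.sum_nonneg fun z _ => ?_
    by_cases hz : QZ z = 0
    · simp [hz]
    · rw [if_neg hz]
      have : 0 < QZ z := lt_of_le_of_ne (hQ0 z) (Ne.symm hz)
      positivity
  -- per-seed Cauchy-Schwarz
  have hA : ∀ i : ι, (∑ k, ∑ v, ∑ z, |D i k v z|)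
      ≤ Real.sqrt (Fintype.card K : ℝ) * Real.sqrt (T i) := by
    intro i
    have hDzero : ∀ p : K × V × Z, QZ p.2.2 / (Fintype.card V : ℝ) = 0 →
        D i p.1 p.2.1 p.2.2 = 0 := by
      intro p hp
      have hz : QZ p.2.2 = 0 := by
        rcases div_eq_zero_iff.mp hp with h | h
        · exact h
        · exact absurd h hnV.ne'
      have h1 : ∀ x : X, P x p.2.1 p.2.2 = 0 := fun x => hQzero p.2.2 hz x p.2.1
      simp only [hD]
      rw [Finset.sum_eq_zero fun x _ => by rw [h1 x]; simp,
        Finset.sum_eq_zero fun x (_ : x ∈ Finset.univ) => h1 x]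
      simp
    have key := cs_abs_step (α := K × V × Z)
      (fun p => D i p.1 p.2.1 p.2.2)
      (fun p => QZ p.2.2 / (Fintype.card V : ℝ))
      (fun p => div_nonneg (hQ0 p.2.2) hnV.le)
      hDzero
    -- now rewrite the three ingredients
    have e1 : ∑ p : K × V × Z, |D i p.1 p.2.1 p.2.2| = ∑ k, ∑ v, ∑ z, |D i k v z| := by
      simp only [Fintype.sum_prod_type]
    have e2 : ∑ p : K × V × Z, QZ p.2.2 / (Fintype.card V : ℝ) = (Fintype.card K : ℝ) := by
      simp only [Fintype.sum_prod_type]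
      rw [Finset.sum_congr rfl fun k (_ : k ∈ Finset.univ) => Finset.sum_congr rfl
        fun v (_ : v ∈ Finset.univ) => (Finset.sum_div _ _ _).symm]
      rw [Finset.sum_congr rfl fun k (_ : k ∈ Finset.univ) => Finset.sum_congr rfl
        fun v (_ : v ∈ Finset.univ) => by rw [hQ1]]
      simp [Finset.card_univ]
    have e3 : ∑ p : K × V × Z,
        (if QZ p.2.2 / (Fintype.card V : ℝ) = 0 then 0
          else (D i p.1 p.2.1 p.2.2) ^ 2 / (QZ p.2.2 / (Fintype.card V : ℝ))) = T i := by
      rw [hT]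
      simp only [Fintype.sum_prod_type]
      refine Finset.sum_congr rfl fun k _ => Finset.sum_congr rfl fun v _ =>
        Finset.sum_congr rfl fun z _ => ?_
      by_cases hz : QZ z = 0
      · rw [if_pos (by rw [hz]; simp), if_pos hz]
      · have hne : QZ z / (Fintype.card V : ℝ) ≠ 0 := by
          refine div_ne_zero hz hnV.ne'
        rw [if_neg hne, if_neg hz, div_div_eq_mul_div]
    rw [e1, e2, e3] at key
    exact key
    -- universality in undivided form
  have huniv' : ∀ x x' : X, x ≠ x' →
      (∑ i, if f i x = f i x' then (1 : ℝ) else 0)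
        ≤ (Fintype.card ι : ℝ) / (Fintype.card K : ℝ) := by
    intro x x' h
    have h1 := huniv x x' h
    rw [div_le_iff₀ hnI] at h1
    calc (∑ i, if f i x = f i x' then (1:ℝ) else 0)
        ≤ 1 / (Fintype.card K : ℝ) * (Fintype.card ι : ℝ) := h1
      _ = (Fintype.card ι : ℝ) / (Fintype.card K : ℝ) := by ring
  -- reordered normalization
  have hP1' : ∑ v, ∑ z, ∑ x, P x v z = 1 := by
    calc ∑ v, ∑ z, ∑ x, P x v z = ∑ v, ∑ x, ∑ z, P x v z :=
          Finset.sum_congr rfl fun v _ => Finset.sum_comm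
      _ = ∑ x, ∑ v, ∑ z, P x v z := Finset.sum_comm
      _ = 1 := hP1
  have hTswap : ∑ i, T i = ∑ v, ∑ z, ∑ i, ∑ k,
      (if QZ z = 0 then 0 else (D i k v z) ^ 2 * (Fintype.card V : ℝ) / QZ z) := by
    simp only [hT]
    exact sum_swap4 _
  have hvz : ∀ v z, (∑ i : ι, ∑ k : K,
      (if QZ z = 0 then 0 else (D i k v z) ^ 2 * (Fintype.card V : ℝ) / QZ z))
      ≤ (Fintype.card ι : ℝ) * (Fintype.card V : ℝ) * (2:ℝ)^(-H) * ∑ x, P x v z := by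
    intro v z
    by_cases hz : QZ z = 0
    · simp only [if_pos hz, Finset.sum_const_zero]
      exact mul_nonneg (mul_nonneg (mul_nonneg hnI.le hnV.le)
        (Real.rpow_nonneg (by norm_num) _)) (Finset.sum_nonneg fun x _ => hP0 x v z)
    · have hq : 0 < QZ z := lt_of_le_of_ne (hQ0 z) (Ne.symm hz)
      simp only [if_neg hz]
      have hpull : ∑ i : ι, ∑ k : K, (D i k v z) ^ 2 * (Fintype.card V : ℝ) / QZ z
          = (∑ i : ι, ∑ k : K, (D i k v z) ^ 2) * (Fintype.card V : ℝ) / QZ z := by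
        rw [Finset.sum_mul, Finset.sum_div]
        refine Finset.sum_congr rfl fun i _ => ?_
        rw [Finset.sum_mul, Finset.sum_div]
      rw [hpull]
      have hcoll := collision_bound (fun x => P x v z) (fun x => hP0 x v z) f hnK huniv'
      have hcoll' : ∑ i : ι, ∑ k : K, (D i k v z) ^ 2
          ≤ (Fintype.card ι : ℝ) * ∑ x, (P x v z) ^ 2 := by
        simpa only [hD] using hcoll
      have hsq : ∑ x, (P x v z) ^ 2 ≤ (QZ z * (2:ℝ)^(-H)) * ∑ x, P x v z := by
        rw [Finset.mul_sum]
        apply Finset.sum_le_sum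
        intro x _
        have h1 : P x v z ≤ QZ z * (2:ℝ)^(-H) :=
          le_trans (Finset.single_le_sum (fun v' _ => hP0 x v' z) (Finset.mem_univ v))
            (hmin x z)
        calc (P x v z) ^ 2 = P x v z * P x v z := sq (P x v z)
          _ ≤ (QZ z * (2:ℝ)^(-H)) * P x v z := mul_le_mul_of_nonneg_right h1 (hP0 x v z)
      have h2 : ∑ i : ι, ∑ k : K, (D i k v z) ^ 2
          ≤ (Fintype.card ι : ℝ) * ((QZ z * (2:ℝ)^(-H)) * ∑ x, P x v z) :=
        le_trans hcoll' (mul_le_mul_of_nonneg_left hsq hnI.le)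
      calc (∑ i : ι, ∑ k : K, (D i k v z) ^ 2) * (Fintype.card V : ℝ) / QZ z
          ≤ ((Fintype.card ι : ℝ) * ((QZ z * (2:ℝ)^(-H)) * ∑ x, P x v z))
              * (Fintype.card V : ℝ) / QZ z := by
            apply (div_le_div_iff_of_pos_right hq).mpr
            exact mul_le_mul_of_nonneg_right h2 hnV.le
        _ = (Fintype.card ι : ℝ) * (Fintype.card V : ℝ) * (2:ℝ)^(-H) * ∑ x, P x v z := by
            field_simp
  have hTsum : ∑ i, T i ≤ (Fintype.card ι : ℝ) * (Fintype.card V : ℝ) * (2:ℝ)^(-H) := by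
    rw [hTswap]
    calc ∑ v, ∑ z, ∑ i, ∑ k,
        (if QZ z = 0 then 0 else (D i k v z) ^ 2 * (Fintype.card V : ℝ) / QZ z)
        ≤ ∑ v, ∑ z, (Fintype.card ι : ℝ) * (Fintype.card V : ℝ) * (2:ℝ)^(-H)
            * ∑ x, P x v z := by
          apply Finset.sum_le_sum; intro v _
          apply Finset.sum_le_sum; intro z _
          exact hvz v z
      _ = (Fintype.card ι : ℝ) * (Fintype.card V : ℝ) * (2:ℝ)^(-H)
            * (∑ v, ∑ z, ∑ x, P x v z) := by
          rw [Finset.mul_sum]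
          exact Finset.sum_congr rfl fun v _ => by rw [Finset.mul_sum]
      _ = (Fintype.card ι : ℝ) * (Fintype.card V : ℝ) * (2:ℝ)^(-H) := by
          rw [hP1', mul_one]
  -- combine everything
  have hsum : ∑ i, (∑ k, ∑ v, ∑ z, |D i k v z|)
      ≤ (Fintype.card ι : ℝ)
        * Real.sqrt ((Fintype.card K : ℝ) * (Fintype.card V : ℝ) * (2:ℝ)^(-H)) := by
    calc ∑ i, (∑ k, ∑ v, ∑ z, |D i k v z|)
        ≤ ∑ i, Real.sqrt (Fintype.card K : ℝ) * Real.sqrt (T i) :=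
          Finset.sum_le_sum fun i _ => hA i
      _ = Real.sqrt (Fintype.card K : ℝ) * ∑ i, Real.sqrt (T i) := by
          rw [Finset.mul_sum]
      _ ≤ Real.sqrt (Fintype.card K : ℝ)
            * (Real.sqrt (Fintype.card ι : ℝ) * Real.sqrt (∑ i, T i)) := by
          apply mul_le_mul_of_nonneg_left _ (Real.sqrt_nonneg _)
          exact sqrt_jensen T hTnn
      _ ≤ Real.sqrt (Fintype.card K : ℝ)
            * (Real.sqrt (Fintype.card ι : ℝ)
              * Real.sqrt ((Fintype.card ι : ℝ) * (Fintype.card V : ℝ) * (2:ℝ)^(-H))) := by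
          apply mul_le_mul_of_nonneg_left _ (Real.sqrt_nonneg _)
          apply mul_le_mul_of_nonneg_left _ (Real.sqrt_nonneg _)
          exact Real.sqrt_le_sqrt hTsum
      _ = (Fintype.card ι : ℝ)
            * Real.sqrt ((Fintype.card K : ℝ) * (Fintype.card V : ℝ) * (2:ℝ)^(-H)) := by
          rw [← Real.sqrt_mul hnI.le]
          have h1 : (Fintype.card ι : ℝ)
              * ((Fintype.card ι : ℝ) * (Fintype.card V : ℝ) * (2:ℝ)^(-H))
              = (Fintype.card ι : ℝ) ^ 2 * ((Fintype.card V : ℝ) * (2:ℝ)^(-H)) := by ring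
          rw [h1, Real.sqrt_mul (sq_nonneg _), Real.sqrt_sq hnI.le,
            ← mul_assoc, mul_comm (Real.sqrt (Fintype.card K : ℝ)) ((Fintype.card ι : ℝ)),
            mul_assoc, ← Real.sqrt_mul hnK.le, ← mul_assoc]
  rw [← Finset.sum_div, div_div,
    div_le_iff₀ (by positivity : (0:ℝ) < 2 * (Fintype.card ι : ℝ))]
  simp only [hD] at hsum
  have hrw : 1 / 2 * Real.sqrt ((Fintype.card K : ℝ) * (Fintype.card V : ℝ) * (2:ℝ)^(-H))
      * (2 * (Fintype.card ι : ℝ))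
      = (Fintype.card ι : ℝ)
        * Real.sqrt ((Fintype.card K : ℝ) * (Fintype.card V : ℝ) * (2:ℝ)^(-H)) := by ring
  rw [hrw]
  exact hsum
end

section
/- (Secret key extraction surviving extra side information.) Let 𝒦', 𝒲, 𝒱 be finite sets and let (K'_X, K'_Y, W, V) be random variables with joint pmf on 𝒦'×𝒦'×𝒲×𝒱. Suppose that for some 0 < ε < 1/2, d(P_{K'_X K'_Y W}, P^(2)_unif × P_W) ≤ ε, where P^(2)_unif(k,k') = 1[k = k']/|𝒦'|. Then there exist a finite set 𝒦 with log₂|𝒦| ≥ log₂|𝒦'| − log₂|𝒱| − 2·log₂(1/(2ε)) and a function κ : 𝒦' → 𝒦 such that, with K_X = κ(K'_X) and K_Y = κ(K'_Y), d(P_{K_X K_Y W V}, Q^(2)_unif × P_{WV}) ≤ 2ε, where Q^(2)_unif(k,k') = 1[k = k']/|𝒦|. -/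
/-!
Split off from the diagonal of `P` a sub-distribution `R(a, w, v) ≤ P(a, a, w, v)` that is flat
given `W`, i.e. `R(a, w, v) ≤ P_W(w) / |𝒦'|`; the secrecy hypothesis lets it keep mass `1 - ε`.
Hashing with a uniformly random `κ : 𝒦' → 𝒦` costs the discarded mass twice, plus the imbalance
`∑ₐ (1[κ a = k] - 1/|𝒦|) R(a, w, v)` of `R` across the fibres of `κ`. Its second moment over `κ` is
`(1/|𝒦|)(1 - 1/|𝒦|) ∑ₐ R(a, w, v)²`, and flatness bounds `∑ₐ R(a, w, v)²` by
`P_W(w) P_{WV}(w, v) / |𝒦'|`, so by Cauchy–Schwarz the expected imbalance is at most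
`√((|𝒦| - 1) |𝒱| / |𝒦'|)`, which is `≤ 2ε` for `|𝒦| = ⌈(2ε)² |𝒦'| / |𝒱|⌉`. Some `κ` does at least
as well as the average.
-/

open Finset

section RandomFunction

variable {ι β : Type*} [Fintype ι] [DecidableEq ι] [Fintype β]

theorem card_mul_sum_pi_apply (a : ι) (f : β → ℝ) :
    Fintype.card β * ∑ κ : ι → β, f (κ a) = Fintype.card (ι → β) * ∑ j, f j := by
  rw [← Fintype.sum_equiv (Equiv.funSplitAt a β).symm _ _ fun _ => rfl, Fintype.sum_prod_type,
    Fintype.card_congr (Equiv.funSplitAt a β), Fintype.card_prod]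
  simp only [Equiv.funSplitAt_symm_apply, dite_true, sum_const, card_univ, nsmul_eq_mul]
  push_cast
  rw [← mul_sum]
  ring

theorem sum_pi_apply_mul_apply_eq_zero {a b : ι} (hab : a ≠ b) {f : β → ℝ}
    (hf : ∑ j, f j = 0) (g : β → ℝ) : ∑ κ : ι → β, f (κ a) * g (κ b) = 0 := by
  rw [← Fintype.sum_equiv (Equiv.funSplitAt a β).symm _ _ fun _ => rfl, Fintype.sum_prod_type]
  simp only [Equiv.funSplitAt_symm_apply, dite_true, hab.symm, dite_false, ← mul_sum, ← sum_mul,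
    hf, zero_mul]

theorem card_mul_sum_pi_sq_sum_apply_mul {e : β → ℝ} (he : ∑ j, e j = 0) (r : ι → ℝ) :
    Fintype.card β * ∑ κ : ι → β, (∑ a, e (κ a) * r a) ^ 2
      = Fintype.card (ι → β) * (∑ j, e j ^ 2) * ∑ a, r a ^ 2 := by
  have h_diag (a : ι) : ∑ b, ∑ κ : ι → β, e (κ a) * r a * (e (κ b) * r b)
      = r a ^ 2 * ∑ κ : ι → β, e (κ a) ^ 2 := by
    rw [sum_eq_single_of_mem a (mem_univ a), mul_sum]
    · exact sum_congr rfl fun κ _ => by ring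
    intro b _ hba
    calc ∑ κ : ι → β, e (κ a) * r a * (e (κ b) * r b)
        = r a * r b * ∑ κ : ι → β, e (κ a) * e (κ b) := by
          rw [mul_sum]; exact sum_congr rfl fun κ _ => by ring
      _ = 0 := by rw [sum_pi_apply_mul_apply_eq_zero (Ne.symm hba) he, mul_zero]
  calc (Fintype.card β : ℝ) * ∑ κ : ι → β, (∑ a, e (κ a) * r a) ^ 2
      = ∑ a, r a ^ 2 * (Fintype.card β * ∑ κ : ι → β, e (κ a) ^ 2) := by
        simp only [sq, sum_mul_sum]
        rw [sum_comm]
        simp_rw [sum_comm (s := univ (α := ι → β)), ← sq, h_diag]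
        rw [mul_sum]
        exact sum_congr rfl fun a _ => by ring
    _ = Fintype.card (ι → β) * (∑ j, e j ^ 2) * ∑ a, r a ^ 2 := by
        simp only [card_mul_sum_pi_apply _ (fun j => e j ^ 2)]
        rw [← sum_mul, mul_comm]

theorem sum_pi_sum_abs_sum_centered_indicator_le [DecidableEq β] [Nonempty β] (r : ι → ℝ) :
    ∑ κ : ι → β, ∑ k, |∑ a, ((if κ a = k then 1 else 0) - 1 / (Fintype.card β : ℝ)) * r a|
      ≤ Fintype.card (ι → β) * √((Fintype.card β - 1) * ∑ a, r a ^ 2) := by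
  set n : ℝ := (Fintype.card β : ℝ)
  set F : ℝ := (Fintype.card (ι → β) : ℝ)
  have hn : 0 < n := Nat.cast_pos.2 Fintype.card_pos
  have h_each (k : β) : ∑ κ : ι → β, |∑ a, ((if κ a = k then 1 else 0) - 1 / n) * r a|
      ≤ F / n * √((n - 1) * ∑ a, r a ^ 2) := by
    set e : β → ℝ := fun j => (if j = k then 1 else 0) - 1 / n
    have he : ∑ j, e j = 0 := by simp [e, sum_sub_distrib, n, hn.ne']
    have he2 : ∑ j, e j ^ 2 = 1 - 1 / n := by
      simp only [e, sub_sq, sum_add_distrib, sum_sub_distrib, ite_pow, ← sum_mul]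
      simp [n]
      field_simp
      ring
    have h_X : ∑ κ : ι → β, (∑ a, e (κ a) * r a) ^ 2
        = F * (1 - 1 / n) * (∑ a, r a ^ 2) / n := by
      rw [eq_div_iff hn.ne', mul_comm, ← he2]
      exact card_mul_sum_pi_sq_sum_apply_mul he r
    have h_cs := Real.sum_mul_le_sqrt_mul_sqrt univ (fun _ : ι → β => (1 : ℝ))
      (fun κ => |∑ a, e (κ a) * r a|)
    simp only [one_mul, one_pow, sum_const, card_univ, nsmul_eq_mul, mul_one, sq_abs] at h_cs
    refine h_cs.trans (le_of_eq ?_)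
    have h_sq : F * ∑ κ : ι → β, (∑ a, e (κ a) * r a) ^ 2
        = (F / n) ^ 2 * ((n - 1) * ∑ a, r a ^ 2) := by
      rw [h_X]
      field_simp
    rw [← Real.sqrt_mul (by positivity), h_sq, Real.sqrt_mul (by positivity),
      Real.sqrt_sq (by positivity)]
  calc ∑ κ : ι → β, ∑ k, |∑ a, ((if κ a = k then 1 else 0) - 1 / n) * r a|
      ≤ ∑ _k : β, F / n * √((n - 1) * ∑ a, r a ^ 2) := by
        rw [sum_comm]; exact sum_le_sum fun k _ => h_each k
    _ = F * √((n - 1) * ∑ a, r a ^ 2) := by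
        rw [sum_const, card_univ, nsmul_eq_mul, ← mul_assoc, mul_div_cancel₀ _ hn.ne']

end RandomFunction

theorem abs_sub_le_sub_add_abs_sub_add_sub {x x' y y' : ℝ} (hx : x' ≤ x) (hy : y' ≤ y) :
    |x - y| ≤ (x - x') + |x' - y'| + (y - y') :=
  abs_le.2 ⟨by linarith [neg_abs_le (x' - y')], by linarith [le_abs_self (x' - y')]⟩

section Pushforward

variable {ι β : Type*} [Fintype ι] [DecidableEq β]

def pairPushforward (κ : ι → β) (f : ι → ι → ℝ) (k k' : β) : ℝ :=
  ∑ a, ∑ b, if κ a = k ∧ κ b = k' then f a b else 0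

theorem sum_sum_pairPushforward [Fintype β] (κ : ι → β) (f : ι → ι → ℝ) :
    ∑ k, ∑ k', pairPushforward κ f k k' = ∑ a, ∑ b, f a b := by
  simp only [pairPushforward, ite_and]
  rw [sum_comm]
  simp [sum_comm (s := univ (α := β))]

theorem pairPushforward_mono (κ : ι → β) {f g : ι → ι → ℝ} (hfg : ∀ a b, f a b ≤ g a b)
    (k k' : β) : pairPushforward κ f k k' ≤ pairPushforward κ g k k' :=
  sum_le_sum fun a _ => sum_le_sum fun b _ => by split_ifs; exacts [hfg a b, le_rfl]

theorem sum_abs_pairPushforward_diag_sub [Fintype β] [DecidableEq ι] (κ : ι → β) (r : ι → ℝ)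
    (k : β) :
    ∑ k', |pairPushforward κ (fun a b => if a = b then r a else 0) k k'
        - (if k = k' then 1 / (Fintype.card β : ℝ) else 0) * ∑ a, r a|
      = |∑ a, ((if κ a = k then 1 else 0) - 1 / (Fintype.card β : ℝ)) * r a| := by
  rw [sum_eq_single_of_mem k (mem_univ k)]
  · congr 1
    simp only [pairPushforward, if_true, ite_and, ite_mul, one_mul, zero_mul, sub_mul,
      sum_sub_distrib, ← mul_sum]
    congr 1
    refine sum_congr rfl fun a _ => ?_
    split_ifs with ha
    · rw [sum_eq_single_of_mem a (mem_univ a) fun b _ hba => by simp [Ne.symm hba]]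
      simp [ha]
    · exact sum_const_zero
  · intro k' _ hk'
    have h_off : pairPushforward κ (fun a b => if a = b then r a else 0) k k' = 0 :=
      sum_eq_zero fun a _ => sum_eq_zero fun b _ => by aesop
    simp [h_off, Ne.symm hk']

theorem sum_sum_abs_pairPushforward_sub_le [Fintype β] [DecidableEq ι] (κ : ι → β)
    {p : ι → ι → ℝ} (hp : ∀ a b, 0 ≤ p a b) {r : ι → ℝ} (hrp : ∀ a, r a ≤ p a a) :
    ∑ k, ∑ k', |pairPushforward κ p k k'
        - (if k = k' then 1 / (Fintype.card β : ℝ) else 0) * ∑ a, ∑ b, p a b|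
      ≤ 2 * (∑ a, ∑ b, p a b - ∑ a, r a)
        + ∑ k, |∑ a, ((if κ a = k then 1 else 0) - 1 / (Fintype.card β : ℝ)) * r a| := by
  set d : ι → ι → ℝ := fun a b => if a = b then r a else 0
  set u : β → β → ℝ := fun k k' => if k = k' then 1 / (Fintype.card β : ℝ) else 0
  set mp := ∑ a, ∑ b, p a b
  set mr := ∑ a, r a
  have hdp (a b : ι) : d a b ≤ p a b := by
    by_cases hab : a = b
    · subst hab; simpa [d] using hrp a
    · simpa [d, hab] using hp a b
  have hmr : mr ≤ mp := by
    simpa [d, mr] using sum_le_sum fun a (_ : a ∈ univ) => sum_le_sum fun b (_ : b ∈ univ) =>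
      hdp a b
  have hu_sum : ∑ k, ∑ k', u k k' ≤ 1 := by
    simp only [u, sum_ite_eq, mem_univ, if_true, sum_const, card_univ, nsmul_eq_mul, mul_one_div]
    exact div_self_le_one _
  calc ∑ k, ∑ k', |pairPushforward κ p k k' - u k k' * mp|
      ≤ ∑ k, ∑ k', ((pairPushforward κ p k k' - pairPushforward κ d k k')
          + |pairPushforward κ d k k' - u k k' * mr| + u k k' * (mp - mr)) := by
        gcongr with k _ k' _
        rw [mul_sub]
        exact abs_sub_le_sub_add_abs_sub_add_sub (pairPushforward_mono κ hdp k k')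
          (mul_le_mul_of_nonneg_left hmr (by positivity))
    _ = (mp - mr) + ∑ k, |∑ a, ((if κ a = k then 1 else 0) - 1 / (Fintype.card β : ℝ)) * r a|
          + (∑ k, ∑ k', u k k') * (mp - mr) := by
        simp only [sum_add_distrib, sum_sub_distrib, sum_sum_pairPushforward,
          sum_abs_pairPushforward_diag_sub, sum_mul, d, u, mr, mp]
        simp
    _ ≤ 2 * (mp - mr)
          + ∑ k, |∑ a, ((if κ a = k then 1 else 0) - 1 / (Fintype.card β : ℝ)) * r a| := by
        nlinarith [sub_nonneg.2 hmr]

end Pushforward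

theorem sub_min_eq_half (a b : ℝ) : a - min a b = (|a - b| + (a - b)) / 2 := by
  rcases le_total a b with h | h
  · rw [min_eq_left h, abs_of_nonpos (sub_nonpos.2 h)]; ring
  · rw [min_eq_right h, abs_of_nonneg (sub_nonneg.2 h)]; ring

theorem exists_le_sum_eq_min {V : Type*} [Fintype V] {x : V → ℝ} (hx : ∀ v, 0 ≤ x v) {t : ℝ}
    (ht : 0 ≤ t) :
    ∃ y : V → ℝ, (∀ v, 0 ≤ y v) ∧ (∀ v, y v ≤ x v) ∧ ∑ v, y v = min (∑ v, x v) t := by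
  have hs : 0 ≤ ∑ v, x v := sum_nonneg fun v _ => hx v
  have hc : 0 ≤ min 1 (t / ∑ v, x v) := le_min zero_le_one (div_nonneg ht hs)
  refine ⟨fun v => x v * min 1 (t / ∑ v, x v), fun v => mul_nonneg (hx v) hc,
    fun v => mul_le_of_le_one_right (hx v) (min_le_left _ _), ?_⟩
  rw [← sum_mul, mul_min_of_nonneg _ _ hs, mul_one]
  rcases hs.eq_or_lt with h | h
  · simp [← h, ht]
  · rw [mul_div_cancel₀ _ h.ne']

theorem sum_sum_sqrt_mul_sqrt_le_sqrt_card {W V : Type*} [Fintype W] [Fintype V] {q : W → ℝ}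
    {t : W → V → ℝ} (hq0 : ∀ w, 0 ≤ q w) (ht0 : ∀ w v, 0 ≤ t w v) (hq1 : ∑ w, q w ≤ 1)
    (ht1 : ∑ w, ∑ v, t w v ≤ 1) :
    ∑ w, ∑ v, √(q w) * √(t w v) ≤ √(Fintype.card V) := by
  have h := Real.sum_sqrt_mul_sqrt_le (univ : Finset (W × V)) (f := fun x => q x.1)
    (g := fun x => t x.1 x.2) (fun x => hq0 x.1) (fun x => ht0 x.1 x.2)
  simp only [Fintype.sum_prod_type, sum_const, card_univ, nsmul_eq_mul] at h
  rw [← mul_sum] at h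
  refine h.trans ?_
  calc √(Fintype.card V * ∑ w, q w) * √(∑ w, ∑ v, t w v)
      ≤ √(Fintype.card V * 1) * √1 := by gcongr
    _ = √(Fintype.card V) := by simp

theorem sum_pi_sum_abs_centered_indicator_le_of_flat {ι β W V : Type*} [Fintype ι]
    [DecidableEq ι] [Fintype β] [DecidableEq β] [Nonempty β] [Fintype W] [Fintype V]
    {R : ι → W → V → ℝ} {q : W → ℝ} {t : W → V → ℝ} (hR0 : ∀ a w v, 0 ≤ R a w v)
    (hRq : ∀ a w v, R a w v ≤ q w / Fintype.card ι)
    (hRt : ∀ w v, ∑ a, R a w v ≤ t w v) (hq0 : ∀ w, 0 ≤ q w) (hq1 : ∑ w, q w ≤ 1)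
    (ht1 : ∑ w, ∑ v, t w v ≤ 1) :
    ∑ κ : ι → β, ∑ w, ∑ v, ∑ k,
        |∑ a, ((if κ a = k then 1 else 0) - 1 / (Fintype.card β : ℝ)) * R a w v|
      ≤ Fintype.card (ι → β)
        * √((Fintype.card β - 1) * Fintype.card V / Fintype.card ι) := by
  set n : ℝ := (Fintype.card β : ℝ)
  set M : ℝ := (Fintype.card ι : ℝ)
  set F : ℝ := (Fintype.card (ι → β) : ℝ)
  have hn : 1 ≤ n := Nat.one_le_cast.2 Fintype.card_pos
  have hnM : 0 ≤ (n - 1) / M := div_nonneg (sub_nonneg.2 hn) (Nat.cast_nonneg _)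
  have ht0 (w : W) (v : V) : 0 ≤ t w v := (sum_nonneg fun a _ => hR0 a w v).trans (hRt w v)
  have h_sq (w : W) (v : V) :
      (n - 1) * ∑ a, R a w v ^ 2 ≤ (n - 1) / M * (q w * t w v) := by
    calc (n - 1) * ∑ a, R a w v ^ 2 ≤ (n - 1) * ∑ a, q w / M * R a w v := by
          gcongr with a
          rw [sq]; exact mul_le_mul_of_nonneg_right (hRq a w v) (hR0 a w v)
      _ ≤ (n - 1) * (q w / M * t w v) := by
          rw [← mul_sum]; gcongr; exacts [div_nonneg (hq0 w) (Nat.cast_nonneg _), hRt w v]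
      _ = (n - 1) / M * (q w * t w v) := by ring
  calc ∑ κ : ι → β, ∑ w, ∑ v, ∑ k, |∑ a, ((if κ a = k then 1 else 0) - 1 / n) * R a w v|
      = ∑ w, ∑ v, ∑ κ : ι → β, ∑ k, |∑ a, ((if κ a = k then 1 else 0) - 1 / n) * R a w v| := by
        simp only [sum_comm (s := univ (α := ι → β))]
    _ ≤ ∑ w, ∑ v, F * √((n - 1) / M) * (√(q w) * √(t w v)) := by
        gcongr with w _ v
        refine (sum_pi_sum_abs_sum_centered_indicator_le _).trans ?_
        rw [← Real.sqrt_mul (hq0 w), mul_assoc, ← Real.sqrt_mul hnM]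
        exact mul_le_mul_of_nonneg_left (Real.sqrt_le_sqrt (h_sq w v)) (Nat.cast_nonneg _)
    _ = F * √((n - 1) / M) * ∑ w, ∑ v, √(q w) * √(t w v) := by simp only [mul_sum]
    _ ≤ F * √((n - 1) / M) * √(Fintype.card V) := by
        gcongr; exact sum_sum_sqrt_mul_sqrt_le_sqrt_card hq0 ht0 hq1 ht1
    _ = F * √((n - 1) * Fintype.card V / M) := by
        rw [mul_assoc, ← Real.sqrt_mul hnM, div_mul_eq_mul_div]

section SecretKey

variable {K' W V : Type*} [Fintype K'] [Fintype W] [Fintype V] {P : K' → K' → W → V → ℝ}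

theorem nonempty_of_sum_eq_one (hP1 : ∑ a, ∑ b, ∑ w, ∑ v, P a b w v = 1) :
    Nonempty K' ∧ Nonempty V := by
  constructor <;> by_contra h <;> simp [not_nonempty_iff.1 h] at hP1

theorem sum_marginal_eq_one (hP1 : ∑ a, ∑ b, ∑ w, ∑ v, P a b w v = 1) :
    ∑ w, ∑ a, ∑ b, ∑ v, P a b w v = 1 := by
  rw [← hP1]
  simp only [sum_comm (t := univ (α := W))]

theorem sum_joint_marginal_eq_one (hP1 : ∑ a, ∑ b, ∑ w, ∑ v, P a b w v = 1) :
    ∑ w, ∑ v, ∑ a, ∑ b, P a b w v = 1 := by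
  rw [← hP1]
  simp only [sum_comm (t := univ (α := W)), sum_comm (t := univ (α := V)) (s := univ (α := K'))]

variable [DecidableEq K']

theorem one_sub_sum_min_le (hP0 : ∀ a b w v, 0 ≤ P a b w v)
    (hP1 : ∑ a, ∑ b, ∑ w, ∑ v, P a b w v = 1) {ε : ℝ}
    (hsec : (∑ a, ∑ b, ∑ w,
        |(∑ v, P a b w v)
          - (if a = b then (1 : ℝ) / (Fintype.card K' : ℝ) else 0)
            * (∑ a', ∑ b', ∑ v, P a' b' w v)|) / 2 ≤ ε) :
    1 - ∑ a, ∑ w, min (∑ v, P a a w v)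
      ((∑ a', ∑ b', ∑ v, P a' b' w v) / Fintype.card K') ≤ ε := by
  set M : ℝ := (Fintype.card K' : ℝ)
  set p : K' → K' → W → ℝ := fun a b w => ∑ v, P a b w v
  set q : K' → K' → W → ℝ := fun a b w =>
    (if a = b then 1 / M else 0) * ∑ a', ∑ b', ∑ v, P a' b' w v
  obtain ⟨_, -⟩ := nonempty_of_sum_eq_one hP1
  have hM : M ≠ 0 := Nat.cast_ne_zero.2 Fintype.card_ne_zero
  have hq : ∑ a, ∑ b, ∑ w, q a b w = 1 := by
    simp only [q, ite_mul, zero_mul]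
    rw [sum_congr rfl fun a _ => sum_comm]
    simp only [sum_ite_eq, mem_univ, if_true, ← mul_sum, sum_const, card_univ, nsmul_eq_mul]
    rw [sum_marginal_eq_one hP1, mul_one]
    exact one_div_mul_cancel hM
  have h_min : ∑ a, ∑ b, ∑ w, min (p a b w) (q a b w)
      = ∑ a, ∑ w, min (∑ v, P a a w v) ((∑ a', ∑ b', ∑ v, P a' b' w v) / M) := by
    refine sum_congr rfl fun a _ => ?_
    rw [sum_eq_single_of_mem a (mem_univ a)]
    · simp [q, p, div_eq_inv_mul]
    · intro b _ hba
      refine sum_eq_zero fun w _ => ?_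
      simp only [q, p, Ne.symm hba, if_false, zero_mul]
      exact min_eq_right (sum_nonneg fun v _ => hP0 a b w v)
  calc 1 - ∑ a, ∑ w, min (∑ v, P a a w v) ((∑ a', ∑ b', ∑ v, P a' b' w v) / M)
      = ∑ a, ∑ b, ∑ w, (p a b w - min (p a b w) (q a b w)) := by
        simp only [sum_sub_distrib, h_min, p, hP1]
    _ = (∑ a, ∑ b, ∑ w, |p a b w - q a b w|) / 2
          + ((∑ a, ∑ b, ∑ w, p a b w) - ∑ a, ∑ b, ∑ w, q a b w) / 2 := by
        simp only [sub_min_eq_half, add_div, sub_div, sum_add_distrib, sum_sub_distrib, ← sum_div]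
    _ ≤ ε := by simp only [p, hP1, hq, sub_self, zero_div, add_zero]; exact hsec

theorem exists_flat_diagonal_subdistribution (hP0 : ∀ a b w v, 0 ≤ P a b w v)
    (hP1 : ∑ a, ∑ b, ∑ w, ∑ v, P a b w v = 1) {ε : ℝ}
    (hsec : (∑ a, ∑ b, ∑ w,
        |(∑ v, P a b w v)
          - (if a = b then (1 : ℝ) / (Fintype.card K' : ℝ) else 0)
            * (∑ a', ∑ b', ∑ v, P a' b' w v)|) / 2 ≤ ε) :
    ∃ R : K' → W → V → ℝ, (∀ a w v, 0 ≤ R a w v) ∧ (∀ a w v, R a w v ≤ P a a w v) ∧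
      (∀ a w v, R a w v ≤ (∑ a', ∑ b', ∑ v', P a' b' w v') / Fintype.card K') ∧
      1 - ε ≤ ∑ a, ∑ w, ∑ v, R a w v := by
  choose R hR0 hRP hR_sum using fun a w => exists_le_sum_eq_min (hP0 a a w)
    (div_nonneg (sum_nonneg fun a' _ => sum_nonneg fun b' _ => sum_nonneg fun v' _ =>
      hP0 a' b' w v') (Nat.cast_nonneg (Fintype.card K')))
  refine ⟨R, hR0, hRP, fun a w v => ?_, ?_⟩
  · calc R a w v ≤ ∑ v, R a w v := single_le_sum (fun v _ => hR0 a w v) (mem_univ v)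
      _ ≤ _ := (hR_sum a w).trans_le (min_le_right _ _)
  · simp only [hR_sum]
    linarith [one_sub_sum_min_le hP0 hP1 hsec]

theorem sum_abs_pairPushforward_sub_le_of_diag_le {β : Type*} [Fintype β] [DecidableEq β]
    (κ : K' → β) (hP0 : ∀ a b w v, 0 ≤ P a b w v) (hP1 : ∑ a, ∑ b, ∑ w, ∑ v, P a b w v = 1)
    {R : K' → W → V → ℝ} (hRP : ∀ a w v, R a w v ≤ P a a w v) :
    ∑ k, ∑ k', ∑ w, ∑ v,
        |(∑ a, ∑ b, if κ a = k ∧ κ b = k' then P a b w v else 0)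
          - (if k = k' then (1 : ℝ) / (Fintype.card β : ℝ) else 0) * (∑ a, ∑ b, P a b w v)|
      ≤ 2 * (1 - ∑ a, ∑ w, ∑ v, R a w v)
        + ∑ w, ∑ v, ∑ k,
          |∑ a, ((if κ a = k then 1 else 0) - 1 / (Fintype.card β : ℝ)) * R a w v| := by
  calc _ = ∑ w, ∑ v, ∑ k, ∑ k', |pairPushforward κ (fun a b => P a b w v) k k'
          - (if k = k' then (1 : ℝ) / (Fintype.card β : ℝ) else 0) * (∑ a, ∑ b, P a b w v)| := by
        simp only [sum_comm (t := univ (α := W)),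
          sum_comm (t := univ (α := V)) (s := univ (α := β))]
        rfl
    _ ≤ ∑ w, ∑ v, (2 * (∑ a, ∑ b, P a b w v - ∑ a, R a w v)
          + ∑ k, |∑ a, ((if κ a = k then 1 else 0) - 1 / (Fintype.card β : ℝ)) * R a w v|) := by
        gcongr with w _ v
        exact sum_sum_abs_pairPushforward_sub_le κ (fun a b => hP0 a b w v) (fun a => hRP a w v)
    _ = _ := by
        simp only [sum_add_distrib, ← mul_sum, sum_sub_distrib, sum_joint_marginal_eq_one hP1]
        simp only [sum_comm (t := univ (α := K'))]

theorem exists_key_map_dist_le {β : Type*} [Fintype β] [DecidableEq β] [Nonempty β]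
    (hP0 : ∀ a b w v, 0 ≤ P a b w v) (hP1 : ∑ a, ∑ b, ∑ w, ∑ v, P a b w v = 1) {ε : ℝ}
    (hsec : (∑ a, ∑ b, ∑ w,
        |(∑ v, P a b w v)
          - (if a = b then (1 : ℝ) / (Fintype.card K' : ℝ) else 0)
            * (∑ a', ∑ b', ∑ v, P a' b' w v)|) / 2 ≤ ε) :
    ∃ κ : K' → β,
      (∑ k, ∑ k', ∑ w, ∑ v,
        |(∑ a, ∑ b, if κ a = k ∧ κ b = k' then P a b w v else 0)
          - (if k = k' then (1 : ℝ) / (Fintype.card β : ℝ) else 0) * (∑ a, ∑ b, P a b w v)|) / 2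
        ≤ ε + √((Fintype.card β - 1) * Fintype.card V / Fintype.card K') / 2 := by
  obtain ⟨R, hR0, hRP, hRW, h_mass⟩ := exists_flat_diagonal_subdistribution hP0 hP1 hsec
  set s := √((Fintype.card β - 1) * Fintype.card V / Fintype.card K')
  have h_avg : ∑ κ : K' → β, ∑ w, ∑ v, ∑ k,
      |∑ a, ((if κ a = k then 1 else 0) - 1 / (Fintype.card β : ℝ)) * R a w v|
      ≤ Fintype.card (K' → β) * s :=
    sum_pi_sum_abs_centered_indicator_le_of_flat hR0 hRW
      (fun w v => sum_le_sum fun a _ => (hRP a w v).trans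
        (single_le_sum (fun b _ => hP0 a b w v) (mem_univ a)))
      (fun w => sum_nonneg fun a _ => sum_nonneg fun b _ => sum_nonneg fun v _ => hP0 a b w v)
      (sum_marginal_eq_one hP1).le (sum_joint_marginal_eq_one hP1).le
  have h_total : ∑ κ : K' → β, ∑ k, ∑ k', ∑ w, ∑ v,
      |(∑ a, ∑ b, if κ a = k ∧ κ b = k' then P a b w v else 0)
        - (if k = k' then (1 : ℝ) / (Fintype.card β : ℝ) else 0) * (∑ a, ∑ b, P a b w v)|
      ≤ ∑ _κ : K' → β, (2 * ε + s) := by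
    calc _ ≤ ∑ κ : K' → β, (2 * (1 - ∑ a, ∑ w, ∑ v, R a w v) + ∑ w, ∑ v, ∑ k,
            |∑ a, ((if κ a = k then 1 else 0) - 1 / (Fintype.card β : ℝ)) * R a w v|) :=
          sum_le_sum fun κ _ => sum_abs_pairPushforward_sub_le_of_diag_le κ hP0 hP1 hRP
      _ ≤ Fintype.card (K' → β) * (2 * ε) + Fintype.card (K' → β) * s := by
          rw [sum_add_distrib, sum_const, card_univ, nsmul_eq_mul]
          gcongr
          linarith
      _ = ∑ _κ : K' → β, (2 * ε + s) := by rw [sum_const, card_univ, nsmul_eq_mul, mul_add]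
  obtain ⟨κ, -, hκ⟩ := exists_le_of_sum_le univ_nonempty h_total
  exact ⟨κ, by linarith⟩

end SecretKey

theorem exists_pos_logb_ge_sqrt_le {c d δ : ℝ} (hc : 0 < c) (hd : 0 < d) (hδ : 0 < δ) :
    ∃ N : ℕ, 0 < N ∧
      Real.logb 2 N ≥ Real.logb 2 c - Real.logb 2 d - 2 * Real.logb 2 (1 / δ) ∧
      √((N - 1) * d / c) ≤ δ := by
  set x := δ ^ 2 * c / d
  have hx : 0 < x := by positivity
  refine ⟨⌈x⌉₊, Nat.ceil_pos.2 hx, ?_, ?_⟩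
  · have h_logx : Real.logb 2 x = Real.logb 2 c - Real.logb 2 d - 2 * Real.logb 2 (1 / δ) := by
      rw [Real.logb_div (by positivity) hd.ne', Real.logb_mul (by positivity) hc.ne',
        Real.logb_pow, one_div, Real.logb_inv]
      push_cast
      ring
    rw [ge_iff_le, ← h_logx]
    exact Real.logb_le_logb_of_le one_lt_two hx (Nat.le_ceil x)
  · have h_ceil : (⌈x⌉₊ - 1 : ℝ) * d ≤ δ ^ 2 * c := by
      have := Nat.ceil_lt_add_one hx.le
      calc (⌈x⌉₊ - 1 : ℝ) * d ≤ x * d := by gcongr; linarith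
        _ = δ ^ 2 * c := div_mul_cancel₀ _ hd.ne'
    exact Real.sqrt_le_iff.2 ⟨hδ.le, (div_le_iff₀ hc).2 h_ceil⟩

theorem secret_key_survives_side_information_general
    {K' W V : Type*} [Fintype K'] [Fintype W] [Fintype V] [DecidableEq K']
    (P : K' → K' → W → V → ℝ)
    (hP0 : ∀ a b w v, 0 ≤ P a b w v)
    (hP1 : ∑ a, ∑ b, ∑ w, ∑ v, P a b w v = 1)
    (ε : ℝ) (hε0 : 0 < ε)
    (hsec : (∑ a, ∑ b, ∑ w,
        |(∑ v, P a b w v)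
          - (if a = b then (1 : ℝ) / (Fintype.card K' : ℝ) else 0)
            * (∑ a', ∑ b', ∑ v, P a' b' w v)|) / 2 ≤ ε) :
    ∃ N : ℕ, 0 < N ∧
      Real.logb 2 (N : ℝ)
        ≥ Real.logb 2 (Fintype.card K' : ℝ) - Real.logb 2 (Fintype.card V : ℝ)
          - 2 * Real.logb 2 (1 / (2 * ε)) ∧
      ∃ κ : K' → Fin N,
        (∑ k : Fin N, ∑ k' : Fin N, ∑ w, ∑ v,
          |(∑ a, ∑ b, if κ a = k ∧ κ b = k' then P a b w v else 0)
            - (if k = k' then (1 : ℝ) / (N : ℝ) else 0)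
              * (∑ a, ∑ b, P a b w v)|) / 2 ≤ 2 * ε := by
  obtain ⟨hK', hV⟩ := nonempty_of_sum_eq_one hP1
  obtain ⟨N, hN, h_log, h_sqrt⟩ := exists_pos_logb_ge_sqrt_le (c := Fintype.card K')
    (d := Fintype.card V) (by positivity) (by positivity) (by positivity : 0 < 2 * ε)
  have : NeZero N := ⟨hN.ne'⟩
  obtain ⟨κ, hκ⟩ := exists_key_map_dist_le (β := Fin N) hP0 hP1 hsec
  simp only [Fintype.card_fin] at hκ
  exact ⟨N, hN, h_log, κ, by linarith⟩

/-- **Secret key extraction surviving extra side information.** If `(K'_X, K'_Y, W, V)`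
has joint pmf `P` and `(K'_X, K'_Y)` is an `ε`-secret key given eavesdropper observation
`W`, i.e. `d(P_{K'_X K'_Y W}, P⁽²⁾_unif × P_W) ≤ ε`, then there is a key alphabet of size
`N` with `log₂ N ≥ log₂|𝒦'| − log₂|𝒱| − 2·log₂(1/(2ε))` and a function `κ : 𝒦' → Fin N`
such that `(κ(K'_X), κ(K'_Y))` is a `2ε`-secret key given the extended observation
`(W, V)`. -/
theorem secret_key_survives_side_information
    {K' W V : Type*} [Fintype K'] [Fintype W] [Fintype V] [DecidableEq K']
    (P : K' → K' → W → V → ℝ)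
    (hP0 : ∀ a b w v, 0 ≤ P a b w v)
    (hP1 : ∑ a, ∑ b, ∑ w, ∑ v, P a b w v = 1)
    (ε : ℝ) (hε0 : 0 < ε) (hε1 : ε < 1 / 2)
    (hsec : (∑ a, ∑ b, ∑ w,
        |(∑ v, P a b w v)
          - (if a = b then (1 : ℝ) / (Fintype.card K' : ℝ) else 0)
            * (∑ a', ∑ b', ∑ v, P a' b' w v)|) / 2 ≤ ε) :
    ∃ N : ℕ, 0 < N ∧
      Real.logb 2 (N : ℝ)
        ≥ Real.logb 2 (Fintype.card K' : ℝ) - Real.logb 2 (Fintype.card V : ℝ)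
          - 2 * Real.logb 2 (1 / (2 * ε)) ∧
      ∃ κ : K' → Fin N,
        (∑ k : Fin N, ∑ k' : Fin N, ∑ w, ∑ v,
          |(∑ a, ∑ b, if κ a = k ∧ κ b = k' then P a b w v else 0)
            - (if k = k' then (1 : ℝ) / (N : ℝ) else 0)
              * (∑ a, ∑ b, P a b w v)|) / 2 ≤ 2 * ε :=
  secret_key_survives_side_information_general P hP0 hP1 ε hε0 hsec
end

section
/- Let P and Q be pmfs on a finite set 𝒱, let 0 ≤ ε < 1, and let λ ∈ ℝ. Then β_ε(P, Q) ≥ 2^{−λ}·( P({v : P(v) < 2^λ·Q(v)}) − ε ). Consequently, whenever P({v : P(v) < 2^λ·Q(v)}) > ε, one has −log₂ β_ε(P,Q) ≤ λ − log₂( P({v : P(v) < 2^λ·Q(v)}) − ε ). -/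
open scoped Classical

/-- Upper bound on the optimal hypothesis-testing exponent. For pmfs `P`, `Q` on a finite
set `𝒱` and `0 ≤ ε < 1`, the optimal type-II error
`β_ε(P,Q) = inf { ∑ᵥ Q(v)·T(v) : T : 𝒱 → [0,1], ∑ᵥ P(v)·T(v) ≥ 1 − ε }` satisfies
`β_ε(P,Q) ≥ 2^{−λ}·(P({v : P(v) < 2^λ Q(v)}) − ε)` for every `λ ∈ ℝ`; consequently, if
`P({v : P(v) < 2^λ Q(v)}) > ε` then
`−log₂ β_ε(P,Q) ≤ λ − log₂(P({v : P(v) < 2^λ Q(v)}) − ε)`. -/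
theorem beta_epsilon_lower_bound
    {𝒱 : Type*} [Fintype 𝒱]
    (P Q : 𝒱 → ℝ)
    (hP0 : ∀ v, 0 ≤ P v) (hP1 : ∑ v, P v = 1)
    (hQ0 : ∀ v, 0 ≤ Q v) (hQ1 : ∑ v, Q v = 1)
    (ε lam : ℝ) (hε0 : 0 ≤ ε) (hε1 : ε < 1)
    (β : ℝ)
    (hβ : β = sInf {r : ℝ | ∃ T : 𝒱 → ℝ,
        (∀ v, 0 ≤ T v ∧ T v ≤ 1) ∧ (1 - ε ≤ ∑ v, P v * T v) ∧ r = ∑ v, Q v * T v}) :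
    (2 : ℝ) ^ (-lam) * ((∑ v, if P v < (2 : ℝ) ^ lam * Q v then P v else 0) - ε) ≤ β
    ∧ ((ε < ∑ v, if P v < (2 : ℝ) ^ lam * Q v then P v else 0) →
        - Real.logb 2 β
          ≤ lam - Real.logb 2
              ((∑ v, if P v < (2 : ℝ) ^ lam * Q v then P v else 0) - ε)) := by
  set S : ℝ := ∑ v, if P v < (2 : ℝ) ^ lam * Q v then P v else 0 with hS
  set c : ℝ := (2 : ℝ) ^ (-lam) * (S - ε) with hc
  have h2 : (0:ℝ) < (2:ℝ) ^ (-lam) := Real.rpow_pos_of_pos (by norm_num) _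
  have hmain : c ≤ β := by
    rw [hβ]
    apply le_csInf
    · exact ⟨1, fun _ => 1, fun v => ⟨zero_le_one, le_refl 1⟩,
        by simp [hP1]; linarith, by simp [hQ1]⟩
    · rintro r ⟨T, hT, hfeas, rfl⟩
      have h1 : ∀ v, (if P v < (2 : ℝ) ^ lam * Q v then P v * T v else 0)
          ≥ P v * T v - (if P v < (2 : ℝ) ^ lam * Q v then 0 else P v) := by
        intro v
        by_cases h : P v < (2 : ℝ) ^ lam * Q v
        · simp [h]
        · simp [h]
          nlinarith [(hT v).1, (hT v).2, hP0 v]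
      have hsum1 : (∑ v, if P v < (2 : ℝ) ^ lam * Q v then P v * T v else 0)
          ≥ (∑ v, P v * T v) - (∑ v, if P v < (2 : ℝ) ^ lam * Q v then 0 else P v) := by
        rw [← Finset.sum_sub_distrib]
        exact Finset.sum_le_sum fun v _ => h1 v
      have hsplit : (∑ v, if P v < (2 : ℝ) ^ lam * Q v then 0 else P v) = 1 - S := by
        have : (∑ v, if P v < (2 : ℝ) ^ lam * Q v then 0 else P v) + S = 1 := by
          rw [hS, ← Finset.sum_add_distrib, ← hP1]
          apply Finset.sum_congr rfl
          intro v _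
          by_cases h : P v < (2 : ℝ) ^ lam * Q v <;> simp [h]
        linarith
      have hA : (∑ v, if P v < (2 : ℝ) ^ lam * Q v then P v * T v else 0) ≥ S - ε := by
        rw [hsplit] at hsum1; linarith
      have h3 : ∀ v, (if P v < (2 : ℝ) ^ lam * Q v then P v * T v else 0)
          ≤ (2 : ℝ) ^ lam * (Q v * T v) := by
        intro v
        by_cases h : P v < (2 : ℝ) ^ lam * Q v
        · simp only [h, if_true]
          nlinarith [(hT v).1]
        · simp only [h, if_false]
          have : (0:ℝ) < (2:ℝ) ^ lam := Real.rpow_pos_of_pos (by norm_num) _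
          exact mul_nonneg this.le (mul_nonneg (hQ0 v) (hT v).1)
      have hsum3 : S - ε ≤ (2 : ℝ) ^ lam * ∑ v, Q v * T v := by
        calc S - ε ≤ ∑ v, if P v < (2 : ℝ) ^ lam * Q v then P v * T v else 0 := hA
          _ ≤ ∑ v, (2 : ℝ) ^ lam * (Q v * T v) := Finset.sum_le_sum fun v _ => h3 v
          _ = (2 : ℝ) ^ lam * ∑ v, Q v * T v := by rw [Finset.mul_sum]
      have hinv : (2:ℝ) ^ (-lam) * ((2:ℝ) ^ lam) = 1 := by
        rw [← Real.rpow_add (by norm_num)]; simp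
      calc c = (2 : ℝ) ^ (-lam) * (S - ε) := rfl
        _ ≤ (2 : ℝ) ^ (-lam) * ((2 : ℝ) ^ lam * ∑ v, Q v * T v) :=
            mul_le_mul_of_nonneg_left hsum3 h2.le
        _ = ∑ v, Q v * T v := by rw [← mul_assoc, hinv, one_mul]
  refine ⟨hmain, fun hpos => ?_⟩
  have hcpos : 0 < c := mul_pos h2 (by linarith)
  have hlog : Real.logb 2 c ≤ Real.logb 2 β :=
    Real.logb_le_logb_of_le (by norm_num) hcpos hmain
  have hlogc : Real.logb 2 c = -lam + Real.logb 2 (S - ε) := by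
    rw [hc, Real.logb_mul (ne_of_gt h2) (by linarith), Real.logb_rpow (by norm_num) (by norm_num)]
  linarith
end

section
/- (Single-shot Slepian–Wolf compression via 2-universal hashing.) Let 𝒳, 𝒴, 𝒦 be finite sets, let (X,Y) have joint pmf P_XY on 𝒳×𝒴, and let q : 𝒳×𝒴 → [0,1] satisfy Σ_{x∈𝒳} q(x,y) ≤ 1 for every y ∈ 𝒴. Fix γ > 0 and define the typical set T = {(x,y) : q(x,y) ≥ 2^γ/|𝒦|}. Let F be uniformly distributed on a 2-universal family of functions f : 𝒳 → 𝒦, independent of (X,Y). Then the probability of the error event {(X,Y) ∉ T} ∪ {∃ x' ≠ X with (x',Y) ∈ T and F(x') = F(X)} is at most P_XY(Tᶜ) + 2^{−γ}. -/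
open scoped Classical

/-- **Single-shot Slepian–Wolf compression via 2-universal hashing.** Let `(X,Y)` have
joint pmf `P` on `𝒳 × 𝒴`, let `q : 𝒳 × 𝒴 → [0,1]` be a sub-normalized conditional
measure (`∑ₓ q(x,y) ≤ 1` for each `y`), fix `γ > 0`, and define the typical set
`T = {(x,y) : q(x,y) ≥ 2^γ/|𝒦|}`. If the hash function `F` is drawn uniformly from a
2-universal family `f : ι → 𝒳 → 𝒦`, independently of `(X,Y)`, then the probability of
the error event `{(X,Y) ∉ T} ∪ {∃ x' ≠ X, (x',Y) ∈ T and F(x') = F(X)}` is at most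
`P(Tᶜ) + 2^{−γ}`. -/
theorem slepian_wolf_hashing
    {𝒳 𝒴 K ι : Type*} [Fintype 𝒳] [Fintype 𝒴] [Fintype K] [Fintype ι]
    [Nonempty ι] [DecidableEq 𝒳] [DecidableEq K]
    (P : 𝒳 → 𝒴 → ℝ)
    (hP0 : ∀ x y, 0 ≤ P x y) (hP1 : ∑ x, ∑ y, P x y = 1)
    (q : 𝒳 → 𝒴 → ℝ)
    (hq01 : ∀ x y, 0 ≤ q x y ∧ q x y ≤ 1)
    (hqsub : ∀ y, ∑ x, q x y ≤ 1)
    (γ : ℝ) (hγ : 0 < γ)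
    (T : 𝒳 → 𝒴 → Prop)
    (hT : ∀ x y, T x y ↔ (2 : ℝ) ^ γ / (Fintype.card K : ℝ) ≤ q x y)
    (f : ι → 𝒳 → K)
    (huniv : ∀ x x' : 𝒳, x ≠ x' →
      (∑ i, if f i x = f i x' then (1 : ℝ) else 0) / (Fintype.card ι : ℝ)
        ≤ 1 / (Fintype.card K : ℝ)) :
    (∑ i : ι, ∑ x, ∑ y,
        if (¬ T x y ∨ ∃ x' : 𝒳, x' ≠ x ∧ T x' y ∧ f i x' = f i x)
        then P x y else 0) / (Fintype.card ι : ℝ)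
      ≤ (∑ x, ∑ y, if ¬ T x y then P x y else 0) + (2 : ℝ) ^ (-γ) := by
  classical
  rcases isEmpty_or_nonempty 𝒳 with hX | hX
  · have h2 : (0:ℝ) ≤ (2:ℝ) ^ (-γ) := le_of_lt (Real.rpow_pos_of_pos (by norm_num) _)
    simp [Finset.univ_eq_empty]
    positivity
  haveI : Nonempty K := ⟨f (Classical.arbitrary ι) (Classical.arbitrary 𝒳)⟩
  have hNpos : (0:ℝ) < (Fintype.card ι : ℝ) := by exact_mod_cast Fintype.card_pos
  have hKpos : (0:ℝ) < (Fintype.card K : ℝ) := by exact_mod_cast Fintype.card_pos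
  have h2γ : (0:ℝ) < (2:ℝ) ^ γ := Real.rpow_pos_of_pos (by norm_num) γ
  set N : ℝ := (Fintype.card ι : ℝ)
  set Kc : ℝ := (Fintype.card K : ℝ)
  -- cardinality bound on the typical set
  have hScard : ∀ y, ((Finset.univ.filter (fun x' => T x' y)).card : ℝ)
      ≤ Kc * (2:ℝ) ^ (-γ) := by
    intro y
    have h1 : ((Finset.univ.filter fun x' => T x' y).card : ℝ) * ((2:ℝ)^γ / Kc) ≤ 1 := by
      calc ((Finset.univ.filter fun x' => T x' y).card : ℝ) * ((2:ℝ)^γ / Kc)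
          = ∑ x' ∈ Finset.univ.filter (fun x' => T x' y), (2:ℝ)^γ / Kc := by
            rw [Finset.sum_const, nsmul_eq_mul]
        _ ≤ ∑ x' ∈ Finset.univ.filter (fun x' => T x' y), q x' y := by
            apply Finset.sum_le_sum
            intro x hx
            exact (hT x y).1 (Finset.mem_filter.mp hx).2
        _ ≤ ∑ x', q x' y := Finset.sum_le_sum_of_subset_of_nonneg
            (Finset.filter_subset _ _) (fun x _ _ => (hq01 x y).1)
        _ ≤ 1 := hqsub y
    have h2 : ((Finset.univ.filter fun x' => T x' y).card : ℝ) ≤ Kc / (2:ℝ)^γ := by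
      rw [le_div_iff₀ h2γ]
      calc ((Finset.univ.filter fun x' => T x' y).card : ℝ) * (2:ℝ)^γ
          = (((Finset.univ.filter fun x' => T x' y).card : ℝ) * ((2:ℝ)^γ / Kc)) * Kc := by
            field_simp
        _ ≤ 1 * Kc := by nlinarith
        _ = Kc := one_mul _
    rw [Real.rpow_neg (by norm_num : (0:ℝ) ≤ 2)]
    rw [div_eq_mul_inv] at h2
    exact h2
  -- collision probability bound
  have hcol : ∀ x y,
      (∑ i, if (∃ x' : 𝒳, x' ≠ x ∧ T x' y ∧ f i x' = f i x) then (1:ℝ) else 0)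
        ≤ N * (2:ℝ) ^ (-γ) := by
    intro x y
    set S := Finset.univ.filter (fun x' => x' ≠ x ∧ T x' y) with hS
    have step1 : ∀ i : ι, (if (∃ x' : 𝒳, x' ≠ x ∧ T x' y ∧ f i x' = f i x) then (1:ℝ) else 0)
        ≤ ∑ x' ∈ S, (if f i x' = f i x then (1:ℝ) else 0) := by
      intro i
      split_ifs with h
      · obtain ⟨x', hne, hT', hf⟩ := h
        have hmem : x' ∈ S := by simp [hS, hne, hT']
        have hle := Finset.single_le_sum (f := fun x'' => if f i x'' = f i x then (1:ℝ) else 0)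
          (fun j _ => by positivity) hmem
        simpa [hf] using hle
      · exact Finset.sum_nonneg (fun j _ => by positivity)
    calc (∑ i, if (∃ x' : 𝒳, x' ≠ x ∧ T x' y ∧ f i x' = f i x) then (1:ℝ) else 0)
        ≤ ∑ i, ∑ x' ∈ S, (if f i x' = f i x then (1:ℝ) else 0) :=
          Finset.sum_le_sum (fun i _ => step1 i)
      _ = ∑ x' ∈ S, ∑ i, (if f i x' = f i x then (1:ℝ) else 0) := Finset.sum_comm
      _ ≤ ∑ x' ∈ S, N / Kc := by
          apply Finset.sum_le_sum
          intro x' hx'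
          have hne : x' ≠ x := (Finset.mem_filter.mp hx').2.1
          have h := huniv x' x hne
          rw [div_le_div_iff₀ hNpos hKpos] at h
          rw [le_div_iff₀ hKpos]
          linarith
      _ = (S.card : ℝ) * (N / Kc) := by rw [Finset.sum_const, nsmul_eq_mul]
      _ ≤ (Kc * (2:ℝ)^(-γ)) * (N / Kc) := by
          apply mul_le_mul_of_nonneg_right _ (by positivity)
          calc (S.card : ℝ) ≤ ((Finset.univ.filter (fun x' => T x' y)).card : ℝ) := by
                exact_mod_cast Finset.card_le_card (by
                  intro a ha
                  simp only [hS, Finset.mem_filter] at ha ⊢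
                  exact ⟨ha.1, ha.2.2⟩)
            _ ≤ Kc * (2:ℝ)^(-γ) := hScard y
      _ = N * (2:ℝ)^(-γ) := by field_simp
  rw [div_le_iff₀ hNpos]
  calc (∑ i : ι, ∑ x, ∑ y,
        if (¬ T x y ∨ ∃ x' : 𝒳, x' ≠ x ∧ T x' y ∧ f i x' = f i x) then P x y else 0)
      ≤ ∑ i : ι, ∑ x, ∑ y,
          ((if ¬ T x y then P x y else 0)
            + (if (∃ x' : 𝒳, x' ≠ x ∧ T x' y ∧ f i x' = f i x) then P x y else 0)) := by
        apply Finset.sum_le_sum; intro i _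
        apply Finset.sum_le_sum; intro x _
        apply Finset.sum_le_sum; intro y _
        have hp := hP0 x y
        by_cases hA : ¬ T x y <;>
          by_cases hB : (∃ x' : 𝒳, x' ≠ x ∧ T x' y ∧ f i x' = f i x) <;>
          simp [hA, hB] <;> linarith
    _ = ∑ i : ι, ((∑ x, ∑ y, if ¬ T x y then P x y else 0)
          + ∑ x, ∑ y, (if (∃ x' : 𝒳, x' ≠ x ∧ T x' y ∧ f i x' = f i x) then P x y else 0)) := by
        simp [Finset.sum_add_distrib]
    _ = N * (∑ x, ∑ y, if ¬ T x y then P x y else 0)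
          + ∑ i : ι, ∑ x, ∑ y,
              (if (∃ x' : 𝒳, x' ≠ x ∧ T x' y ∧ f i x' = f i x) then P x y else 0) := by
        rw [Finset.sum_add_distrib, Finset.sum_const, nsmul_eq_mul, Finset.card_univ]
    _ ≤ N * (∑ x, ∑ y, if ¬ T x y then P x y else 0) + N * (2:ℝ)^(-γ) := by
        gcongr _ + ?_
        calc (∑ i : ι, ∑ x, ∑ y,
              (if (∃ x' : 𝒳, x' ≠ x ∧ T x' y ∧ f i x' = f i x) then P x y else 0))
            = ∑ x, ∑ y, ∑ i : ι,
              (if (∃ x' : 𝒳, x' ≠ x ∧ T x' y ∧ f i x' = f i x) then P x y else 0) := by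
              rw [Finset.sum_comm]
              congr 1; ext x
              rw [Finset.sum_comm]
          _ = ∑ x, ∑ y, P x y * ∑ i : ι,
              (if (∃ x' : 𝒳, x' ≠ x ∧ T x' y ∧ f i x' = f i x) then (1:ℝ) else 0) := by
              congr 1; ext x; congr 1; ext y
              rw [Finset.mul_sum]
              congr 1; ext i
              split_ifs <;> simp
          _ ≤ ∑ x, ∑ y, P x y * (N * (2:ℝ)^(-γ)) := by
              apply Finset.sum_le_sum; intro x _
              apply Finset.sum_le_sum; intro y _
              exact mul_le_mul_of_nonneg_left (hcol x y) (hP0 x y)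
          _ = (∑ x, ∑ y, P x y) * (N * (2:ℝ)^(-γ)) := by
              rw [Finset.sum_mul]
              congr 1; ext x
              rw [Finset.sum_mul]
          _ = N * (2:ℝ)^(-γ) := by rw [hP1, one_mul]
    _ = ((∑ x, ∑ y, if ¬ T x y then P x y else 0) + (2:ℝ)^(-γ)) * N := by ring
end

section
/- (Min-entropy within a good spectrum slice.) Let 𝒯, 𝒳 be finite sets, (Π, X) with joint pmf P_ΠX on 𝒯×𝒳, N a positive integer, and λ_min ∈ ℝ, Δ > 0. Set λ^(j) = λ_min + (j−1)Δ and T^(j) = {(τ,x) : P_X(x) > 0 and λ^(j) ≤ −log₂ P_{Π|X}(τ|x) < λ^(j) + Δ} for 1 ≤ j ≤ N, and let J be the random variable equal to j if (Π, X) ∈ T^(j) for some 1 ≤ j ≤ N and equal to 0 otherwise. Then for every j ∈ {1,…,N} with P(J = j) ≥ 1/N²: min over (τ,x) with P_{ΠX|J=j}(τ,x) > 0 of −log₂( P_{ΠX|J=j}(τ,x)/P_X(x) ) ≥ λ_min + (j−1)Δ − 2·log₂ N. -/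
open scoped Classical

/-- **Min-entropy within a good spectrum slice.** Let `(Π, X)` have joint pmf `P` on
`𝒯 × 𝒳`, and slice the spectrum of `−log₂ P_{Π|X}(τ|x)` into `N` slices
`T⁽ʲ⁾ = {(τ,x) : P_X(x) > 0, λ_min + (j−1)Δ ≤ −log₂ P_{Π|X}(τ|x) < λ_min + (j−1)Δ + Δ}`,
`1 ≤ j ≤ N`. Let `J = j` when `(Π,X) ∈ T⁽ʲ⁾` (so `P(J = j) = P(T⁽ʲ⁾)` and the
conditional pmf is `P_{ΠX|J=j}(τ,x) = 1[(τ,x) ∈ T⁽ʲ⁾]·P(τ,x)/P(T⁽ʲ⁾)`). Then for every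
`j` with `P(J = j) ≥ 1/N²`, every `(τ,x)` in the support of `P_{ΠX|J=j}` satisfies
`−log₂(P_{ΠX|J=j}(τ,x)/P_X(x)) ≥ λ_min + (j−1)Δ − 2·log₂ N`. -/
theorem min_entropy_good_slice
    {𝒯 𝒳 : Type*} [Fintype 𝒯] [Fintype 𝒳]
    (P : 𝒯 → 𝒳 → ℝ)
    (hP0 : ∀ τ x, 0 ≤ P τ x) (hP1 : ∑ τ, ∑ x, P τ x = 1)
    (PX : 𝒳 → ℝ) (hPX : ∀ x, PX x = ∑ τ, P τ x)
    (N : ℕ) (hN : 0 < N) (lamMin Δ : ℝ) (hΔ : 0 < Δ)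
    (T : ℕ → 𝒯 → 𝒳 → Prop)
    (hT : ∀ (j : ℕ) (τ : 𝒯) (x : 𝒳), T j τ x ↔
      (0 < PX x ∧
        lamMin + ((j : ℝ) - 1) * Δ ≤ - Real.logb 2 (P τ x / PX x) ∧
        - Real.logb 2 (P τ x / PX x) < lamMin + ((j : ℝ) - 1) * Δ + Δ)) :
    ∀ j : ℕ, 1 ≤ j → j ≤ N →
      (1 / (N : ℝ) ^ 2 ≤ ∑ τ, ∑ x, if T j τ x then P τ x else 0) →
      ∀ (τ : 𝒯) (x : 𝒳),
        0 < (if T j τ x then P τ x else 0)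
              / (∑ τ', ∑ x', if T j τ' x' then P τ' x' else 0) →
        - Real.logb 2
            (((if T j τ x then P τ x else 0)
                / (∑ τ', ∑ x', if T j τ' x' then P τ' x' else 0)) / PX x)
          ≥ lamMin + ((j : ℝ) - 1) * Δ - 2 * Real.logb 2 (N : ℝ) := by
  intro j hj1 hjN hS τ x hpos
  set S := ∑ τ', ∑ x', if T j τ' x' then P τ' x' else 0 with hSdef
  have hNpos : (0:ℝ) < N := Nat.cast_pos.mpr hN
  have hSpos : 0 < S := lt_of_lt_of_le (by positivity) hS
  have hnum : 0 < (if T j τ x then P τ x else 0) := by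
    by_contra h
    push_neg at h
    have : (if T j τ x then P τ x else 0) / S ≤ 0 := div_nonpos_of_nonpos_of_nonneg h hSpos.le
    linarith
  have htj : T j τ x := by
    by_contra h; simp [h] at hnum
  have hPpos : 0 < P τ x := by simpa [htj] using hnum
  obtain ⟨hPXpos, hlb, _⟩ := (hT j τ x).mp htj
  have hval : (if T j τ x then P τ x else 0) = P τ x := by simp [htj]
  rw [hval]
  have hrw : P τ x / S / PX x = (P τ x / PX x) / S := by ring
  rw [hrw, Real.logb_div (by positivity) (ne_of_gt hSpos)]
  have hlogS : Real.logb 2 S ≥ - (2 * Real.logb 2 (N : ℝ)) := by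
    have h1 : Real.logb 2 (1 / (N:ℝ)^2) ≤ Real.logb 2 S :=
      Real.logb_le_logb_of_le one_lt_two (by positivity) hS
    have h2 : Real.logb 2 (1 / (N:ℝ)^2) = - (2 * Real.logb 2 (N : ℝ)) := by
      rw [one_div, Real.logb_inv, Real.logb_pow]
      push_cast; ring
    linarith
  linarith
end

section
/- (ε-tail of the information complexity density for the example protocol.) Let n ≥ 1 and let m be an integer with 1 ≤ m ≤ 2^{n−1}; set δ = m/2^n and assume δ·(1−δ) > 2^{−2n}. Let 𝒳 = 𝒴 = {1,…,2^n}, let 𝒯 be the disjoint union of {a,b,c} and 𝒳×𝒴, and define τ : 𝒳×𝒴 → 𝒯 by: τ(x,y) = a if x > m and y > m; τ(x,y) = b if x > m and y ≤ m; τ(x,y) = c if x ≤ m and y > m; τ(x,y) = (x,y) if x ≤ m and y ≤ m. Let (X,Y) be uniform on 𝒳×𝒴 and Π = τ(X,Y), with joint pmf P on 𝒯×𝒳×𝒴. Then: (i) ic(τ(x,y); x, y) = 2n whenever x ≤ m and y ≤ m; (ii) ic(τ(x,y); x, y) ≤ log₂(1/δ) + log₂(1/(1−δ)) < 2n for all other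 (x,y); (iii) P({(x,y) : x ≤ m, y ≤ m}) = δ²; and consequently, for every 0 ≤ ε < δ², sup{ λ ∈ ℝ : P( ic(Π; X, Y) > λ ) > ε } = 2n. -/
private lemma sum_if_lt_aux (N m : ℕ) (hm : m ≤ N) (c : ℝ) :
    ∑ y : Fin N, (if y.val < m then c else 0) = m * c := by
  rw [Fin.sum_univ_eq_sum_range (fun k => if k < m then c else 0) N]
  have h1 : ∀ k ∈ Finset.range N, (if k < m then c else 0)
      = if k ∈ Finset.range m then c else 0 := by
    intro k _; simp [Finset.mem_range]
  rw [Finset.sum_congr rfl h1, Finset.sum_ite_mem,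
    Finset.inter_eq_right.mpr (Finset.range_subset_range.mpr hm),
    Finset.sum_const, Finset.card_range, nsmul_eq_mul]

private lemma sum_if_ge_aux (N m : ℕ) (hm : m ≤ N) (c : ℝ) :
    ∑ y : Fin N, (if m ≤ y.val then c else 0) = ((N : ℝ) - m) * c := by
  have h1 : ∀ y : Fin N, (if m ≤ y.val then c else 0)
      = c - (if y.val < m then c else 0) := by
    intro y; by_cases h : m ≤ y.val
    · simp [h, Nat.not_lt.mpr h]
    · simp [h, Nat.lt_of_not_le h]
  rw [Finset.sum_congr rfl (fun y _ => h1 y), Finset.sum_sub_distrib,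
    sum_if_lt_aux N m hm c, Finset.sum_const, Finset.card_univ, Fintype.card_fin,
    nsmul_eq_mul]
  ring



open scoped Classical

/-- **ε-tail of the information complexity density for the example protocol.**
`𝒳 = 𝒴 = {1,…,2ⁿ}` is modelled by `Fin (2^n)` (with `x ∈ {1,…,2ⁿ}` corresponding to
`x.val + 1`, so `x > m ↔ m ≤ x.val` and `x ≤ m ↔ x.val < m`), and
`𝒯 = {a,b,c} ⊔ (𝒳 × 𝒴)` by `Fin 3 ⊕ (Fin (2^n) × Fin (2^n))`. The transcript is
`τ(x,y) = a` if `x > m, y > m`; `b` if `x > m, y ≤ m`; `c` if `x ≤ m, y > m`; `(x,y)`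
otherwise. With `(X,Y)` uniform, `Π = τ(X,Y)`, `δ = m/2ⁿ` and `δ(1−δ) > 2^{−2n}`:
(i) `ic = 2n` on the low block; (ii) `ic ≤ log₂(1/δ) + log₂(1/(1−δ)) < 2n` elsewhere;
(iii) the low block has probability `δ²`; and consequently for every `0 ≤ ε < δ²` the
`ε`-tail `sup{λ : P(ic(Π;X,Y) > λ) > ε}` equals `2n`. -/
theorem example_protocol_ic_tail
    (n m : ℕ) (hn : 1 ≤ n) (hm1 : 1 ≤ m) (hm2 : m ≤ 2 ^ (n - 1))
    (δ : ℝ) (hδ : δ = (m : ℝ) / 2 ^ n)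
    (hδ2 : ((2 : ℝ) ^ (2 * n))⁻¹ < δ * (1 - δ))
    (tau : Fin (2 ^ n) → Fin (2 ^ n) → (Fin 3 ⊕ (Fin (2 ^ n) × Fin (2 ^ n))))
    (htau : ∀ x y : Fin (2 ^ n),
      tau x y = if m ≤ x.val
                then (if m ≤ y.val then Sum.inl 0 else Sum.inl 1)
                else (if m ≤ y.val then Sum.inl 2 else Sum.inr (x, y)))
    (P : (Fin 3 ⊕ (Fin (2 ^ n) × Fin (2 ^ n))) → Fin (2 ^ n) → Fin (2 ^ n) → ℝ)
    (hP : ∀ t x y, P t x y =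
      if t = tau x y then ((2 : ℝ) ^ n * (2 : ℝ) ^ n)⁻¹ else 0)
    (PX PY : Fin (2 ^ n) → ℝ)
    (hPX : ∀ x, PX x = ∑ t, ∑ y, P t x y)
    (hPY : ∀ y, PY y = ∑ t, ∑ x, P t x y)
    (PXY : Fin (2 ^ n) → Fin (2 ^ n) → ℝ)
    (hPXY : ∀ x y, PXY x y = ∑ t, P t x y)
    (PTX : (Fin 3 ⊕ (Fin (2 ^ n) × Fin (2 ^ n))) → Fin (2 ^ n) → ℝ)
    (hPTX : ∀ t x, PTX t x = ∑ y, P t x y)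
    (PTY : (Fin 3 ⊕ (Fin (2 ^ n) × Fin (2 ^ n))) → Fin (2 ^ n) → ℝ)
    (hPTY : ∀ t y, PTY t y = ∑ x, P t x y)
    (ic : (Fin 3 ⊕ (Fin (2 ^ n) × Fin (2 ^ n))) → Fin (2 ^ n) → Fin (2 ^ n) → ℝ)
    (hic : ∀ t x y, ic t x y =
      Real.logb 2 ((P t x y / PXY x y) / (PTX t x / PX x))
        + Real.logb 2 ((P t x y / PXY x y) / (PTY t y / PY y))) :
    (∀ x y : Fin (2 ^ n), x.val < m → y.val < m →
        ic (tau x y) x y = 2 * (n : ℝ))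
    ∧ (∀ x y : Fin (2 ^ n), ¬(x.val < m ∧ y.val < m) →
        ic (tau x y) x y ≤ Real.logb 2 (1 / δ) + Real.logb 2 (1 / (1 - δ)))
    ∧ (Real.logb 2 (1 / δ) + Real.logb 2 (1 / (1 - δ)) < 2 * (n : ℝ))
    ∧ (∑ x, ∑ y, (if x.val < m ∧ y.val < m then PXY x y else 0)) = δ ^ 2
    ∧ (∀ ε : ℝ, 0 ≤ ε → ε < δ ^ 2 →
        sSup {lam : ℝ |
            ε < ∑ t, ∑ x, ∑ y, if lam < ic t x y then P t x y else 0}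
          = 2 * (n : ℝ)) := by
    -- ### basic numerics
    have h2n : (0:ℝ) < 2 ^ n := by positivity
    have hne : (2:ℝ) ^ n ≠ 0 := ne_of_gt h2n
    set c : ℝ := ((2:ℝ)^n * 2^n)⁻¹ with hcdef
    have hcpos : 0 < c := by positivity
    have hmN : m ≤ 2 ^ n := le_trans hm2 (Nat.pow_le_pow_right (by norm_num) (Nat.sub_le n 1))
    have hNR : ((2^n : ℕ) : ℝ) = (2:ℝ)^n := by push_cast; ring
    have hmR : (m:ℝ) ≤ (2:ℝ)^n := by rw [← hNR]; exact_mod_cast hmN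
    have h2n' : (2:ℝ)^n = 2 * 2^(n-1) := by
      rw [← pow_succ']; congr 1; omega
    have hmhalf : (m:ℝ) ≤ 2^(n-1) := by exact_mod_cast hm2
    have hδpos : 0 < δ := by
      rw [hδ]; exact div_pos (by exact_mod_cast hm1) h2n
    have hδle : δ ≤ 1/2 := by
      rw [hδ, div_le_iff₀ h2n]
      nlinarith [pow_pos (show (0:ℝ) < 2 by norm_num) (n-1)]
    have h1δ : 0 < 1 - δ := by linarith
    -- ### marginals
    have hPXY' : ∀ x y, PXY x y = c := by
      intro x y; rw [hPXY]; simp [hP]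
    have hPX' : ∀ x, PX x = ((2:ℝ)^n)⁻¹ := by
      intro x
      rw [hPX, Finset.sum_comm]
      have h1 : ∀ y : Fin (2^n), ∑ t, P t x y = c := by
        intro y; rw [← hPXY]; exact hPXY' x y
      rw [Finset.sum_congr rfl (fun y _ => h1 y), Finset.sum_const,
        Finset.card_univ, Fintype.card_fin, nsmul_eq_mul, hNR, hcdef,
        mul_inv, ← mul_assoc, mul_inv_cancel₀ hne, one_mul]
    have hPY' : ∀ y, PY y = ((2:ℝ)^n)⁻¹ := by
      intro y
      rw [hPY, Finset.sum_comm]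
      have h1 : ∀ x : Fin (2^n), ∑ t, P t x y = c := by
        intro x; rw [← hPXY]; exact hPXY' x y
      rw [Finset.sum_congr rfl (fun x _ => h1 x), Finset.sum_const,
        Finset.card_univ, Fintype.card_fin, nsmul_eq_mul, hNR, hcdef,
        mul_inv, ← mul_assoc, mul_inv_cancel₀ hne, one_mul]
    -- ### conditional transcript marginals, case by case
    have hPTX_ll : ∀ x y : Fin (2^n), x.val < m → y.val < m →
        PTX (Sum.inr (x, y)) x = c := by
      intro x y hx hy
      rw [hPTX]
      have h1 : ∀ y' : Fin (2^n),
          P (Sum.inr (x, y)) x y' = if y' = y then c else 0 := by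
        intro y'
        have ht' : tau x y' = if m ≤ y'.val then Sum.inl 2 else Sum.inr (x, y') := by
          rw [htau, if_neg (Nat.not_le.mpr hx)]
        rw [hP, ht']
        by_cases h : m ≤ y'.val
        · have hne' : y' ≠ y := fun he => by subst he; omega
          simp [h, hne']
        · by_cases he : y' = y
          · subst he; simp [h]
          · simp [h, he, Ne.symm he]
      rw [Finset.sum_congr rfl (fun y' _ => h1 y')]
      simp
    have hPTY_ll : ∀ x y : Fin (2^n), x.val < m → y.val < m →
        PTY (Sum.inr (x, y)) y = c := by
      intro x y hx hy
      rw [hPTY]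
      have h1 : ∀ x' : Fin (2^n),
          P (Sum.inr (x, y)) x' y = if x' = x then c else 0 := by
        intro x'
        have ht' : tau x' y = if m ≤ x'.val then Sum.inl 1 else Sum.inr (x', y) := by
          rw [htau]
          by_cases h : m ≤ x'.val
          · rw [if_pos h, if_pos h, if_neg (Nat.not_le.mpr hy)]
          · rw [if_neg h, if_neg h, if_neg (Nat.not_le.mpr hy)]
        rw [hP, ht']
        by_cases h : m ≤ x'.val
        · have hne' : x' ≠ x := fun he => by subst he; omega
          simp [h, hne']
        · by_cases he : x' = x
          · subst he; simp [h]
          · simp [h, he, Ne.symm he]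
      rw [Finset.sum_congr rfl (fun x' _ => h1 x')]
      simp
    have hPTX_a : ∀ x : Fin (2^n), m ≤ x.val →
        PTX (Sum.inl 0) x = ((2:ℝ)^n - m) * c := by
      intro x hx
      rw [hPTX]
      have h1 : ∀ y' : Fin (2^n),
          P (Sum.inl 0) x y' = if m ≤ y'.val then c else 0 := by
        intro y'
        have ht' : tau x y' = if m ≤ y'.val then Sum.inl 0 else Sum.inl 1 := by
          rw [htau, if_pos hx]
        rw [hP, ht']
        by_cases h : m ≤ y'.val <;> simp [h]
      rw [Finset.sum_congr rfl (fun y' _ => h1 y'), sum_if_ge_aux _ _ hmN c, hNR]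
    have hPTY_a : ∀ y : Fin (2^n), m ≤ y.val →
        PTY (Sum.inl 0) y = ((2:ℝ)^n - m) * c := by
      intro y hy
      rw [hPTY]
      have h1 : ∀ x' : Fin (2^n),
          P (Sum.inl 0) x' y = if m ≤ x'.val then c else 0 := by
        intro x'
        have ht' : tau x' y = if m ≤ x'.val then Sum.inl 0 else Sum.inl 2 := by
          rw [htau]
          by_cases h : m ≤ x'.val
          · rw [if_pos h, if_pos h, if_pos hy]
          · rw [if_neg h, if_neg h, if_pos hy]
        rw [hP, ht']
        by_cases h : m ≤ x'.val <;> simp [h]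
      rw [Finset.sum_congr rfl (fun x' _ => h1 x'), sum_if_ge_aux _ _ hmN c, hNR]
    have hPTX_b : ∀ x : Fin (2^n), m ≤ x.val →
        PTX (Sum.inl 1) x = (m:ℝ) * c := by
      intro x hx
      rw [hPTX]
      have h1 : ∀ y' : Fin (2^n),
          P (Sum.inl 1) x y' = if y'.val < m then c else 0 := by
        intro y'
        have ht' : tau x y' = if m ≤ y'.val then Sum.inl 0 else Sum.inl 1 := by
          rw [htau, if_pos hx]
        rw [hP, ht']
        by_cases h : m ≤ y'.val
        · simp [h, Nat.not_lt.mpr h]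
        · simp [h, Nat.lt_of_not_le h]
      rw [Finset.sum_congr rfl (fun y' _ => h1 y'), sum_if_lt_aux _ _ hmN c]
    have hPTY_b : ∀ y : Fin (2^n), y.val < m →
        PTY (Sum.inl 1) y = ((2:ℝ)^n - m) * c := by
      intro y hy
      rw [hPTY]
      have h1 : ∀ x' : Fin (2^n),
          P (Sum.inl 1) x' y = if m ≤ x'.val then c else 0 := by
        intro x'
        have ht' : tau x' y = if m ≤ x'.val then Sum.inl 1 else Sum.inr (x', y) := by
          rw [htau]
          by_cases h : m ≤ x'.val
          · rw [if_pos h, if_pos h, if_neg (Nat.not_le.mpr hy)]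
          · rw [if_neg h, if_neg h, if_neg (Nat.not_le.mpr hy)]
        rw [hP, ht']
        by_cases h : m ≤ x'.val <;> simp [h]
      rw [Finset.sum_congr rfl (fun x' _ => h1 x'), sum_if_ge_aux _ _ hmN c, hNR]
    have hPTX_c : ∀ x : Fin (2^n), x.val < m →
        PTX (Sum.inl 2) x = ((2:ℝ)^n - m) * c := by
      intro x hx
      rw [hPTX]
      have h1 : ∀ y' : Fin (2^n),
          P (Sum.inl 2) x y' = if m ≤ y'.val then c else 0 := by
        intro y'
        have ht' : tau x y' = if m ≤ y'.val then Sum.inl 2 else Sum.inr (x, y') := by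
          rw [htau, if_neg (Nat.not_le.mpr hx)]
        rw [hP, ht']
        by_cases h : m ≤ y'.val <;> simp [h]
      rw [Finset.sum_congr rfl (fun y' _ => h1 y'), sum_if_ge_aux _ _ hmN c, hNR]
    have hPTY_c : ∀ y : Fin (2^n), m ≤ y.val →
        PTY (Sum.inl 2) y = (m:ℝ) * c := by
      intro y hy
      rw [hPTY]
      have h1 : ∀ x' : Fin (2^n),
          P (Sum.inl 2) x' y = if x'.val < m then c else 0 := by
        intro x'
        have ht' : tau x' y = if m ≤ x'.val then Sum.inl 0 else Sum.inl 2 := by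
          rw [htau]
          by_cases h : m ≤ x'.val
          · rw [if_pos h, if_pos h, if_pos hy]
          · rw [if_neg h, if_neg h, if_pos hy]
        rw [hP, ht']
        by_cases h : m ≤ x'.val
        · simp [h, Nat.not_lt.mpr h]
        · simp [h, Nat.lt_of_not_le h]
      rw [Finset.sum_congr rfl (fun x' _ => h1 x'), sum_if_lt_aux _ _ hmN c]
    -- ### generic value of ic on the support
    have hic_val : ∀ (t : Fin 3 ⊕ (Fin (2^n) × Fin (2^n))) (x y : Fin (2^n)) (A B : ℝ),
        t = tau x y → PTX t x = A → PTY t y = B →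
        ic t x y = - Real.logb 2 (A * 2^n) - Real.logb 2 (B * 2^n) := by
      intro t x y A B ht hAeq hBeq
      rw [hic, hP, if_pos ht, hPXY', hPX', hPY', hAeq, hBeq,
        div_self (ne_of_gt hcpos), div_inv_eq_mul, div_inv_eq_mul, one_div, one_div,
        Real.logb_inv, Real.logb_inv]
      ring
    -- numeric identities
    have hA0 : c * (2:ℝ)^n = ((2:ℝ)^n)⁻¹ := by
      rw [hcdef, mul_inv, mul_comm, ← mul_assoc, mul_inv_cancel₀ hne, one_mul]
    have hA1 : (m:ℝ) * c * 2^n = δ := by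
      rw [hδ, hcdef]; field_simp
    have hA2 : ((2:ℝ)^n - m) * c * 2^n = 1 - δ := by
      rw [hδ, hcdef]; field_simp
    have hlogN : Real.logb 2 ((2:ℝ)^n) = n := by
      rw [Real.logb_pow, Real.logb_self_eq_one (by norm_num), mul_one]
    -- ### part (i)
    have p1 : ∀ x y : Fin (2 ^ n), x.val < m → y.val < m →
        ic (tau x y) x y = 2 * (n : ℝ) := by
      intro x y hx hy
      have ht : tau x y = Sum.inr (x, y) := by
        rw [htau, if_neg (Nat.not_le.mpr hx), if_neg (Nat.not_le.mpr hy)]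
      rw [ht, hic_val _ x y c c ht.symm (hPTX_ll x y hx hy) (hPTY_ll x y hx hy),
        hA0, Real.logb_inv, hlogN]
      ring
    -- ### part (ii)
    have p2 : ∀ x y : Fin (2 ^ n), ¬(x.val < m ∧ y.val < m) →
        ic (tau x y) x y ≤ Real.logb 2 (1 / δ) + Real.logb 2 (1 / (1 - δ)) := by
      intro x y hxy
      rw [one_div, one_div, Real.logb_inv, Real.logb_inv]
      by_cases hx : m ≤ x.val
      · by_cases hy : m ≤ y.val
        · have ht : tau x y = Sum.inl 0 := by rw [htau, if_pos hx, if_pos hy]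
          rw [ht, hic_val _ x y _ _ ht.symm (hPTX_a x hx) (hPTY_a y hy), hA2]
          have hle := (Real.logb_le_logb_of_le (one_lt_two) hδpos (show δ ≤ 1 - δ by linarith))
          linarith
        · have hy' : y.val < m := by omega
          have ht : tau x y = Sum.inl 1 := by rw [htau, if_pos hx, if_neg hy]
          rw [ht, hic_val _ x y _ _ ht.symm (hPTX_b x hx) (hPTY_b y hy'), hA1, hA2]
          linarith
      · have hx' : x.val < m := by omega
        have hy : m ≤ y.val := by omega
        have ht : tau x y = Sum.inl 2 := by rw [htau, if_neg hx, if_pos hy]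
        rw [ht, hic_val _ x y _ _ ht.symm (hPTX_c x hx') (hPTY_c y hy), hA2, hA1]
        linarith
    -- ### part (iii)
    have p3 : Real.logb 2 (1 / δ) + Real.logb 2 (1 / (1 - δ)) < 2 * (n : ℝ) := by
      rw [one_div, one_div, Real.logb_inv, Real.logb_inv]
      have hmul : Real.logb 2 (δ * (1 - δ)) = Real.logb 2 δ + Real.logb 2 (1 - δ) :=
        Real.logb_mul (ne_of_gt hδpos) (ne_of_gt h1δ)
      have hlt : Real.logb 2 (((2:ℝ) ^ (2*n))⁻¹) < Real.logb 2 (δ * (1 - δ)) :=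
        Real.logb_lt_logb one_lt_two (by positivity) hδ2
      have h2 : Real.logb 2 ((2:ℝ)^(2*n)) = 2 * (n:ℝ) := by
        rw [Real.logb_pow, Real.logb_self_eq_one (by norm_num), mul_one]
        push_cast; ring
      rw [Real.logb_inv, h2] at hlt
      linarith
    -- ### the low-block mass
    have hsumblock : (∑ x : Fin (2^n), ∑ y : Fin (2^n),
        (if x.val < m ∧ y.val < m then c else 0)) = δ^2 := by
      have h1 : ∀ x : Fin (2^n), (∑ y : Fin (2^n),
          if x.val < m ∧ y.val < m then c else 0)
          = if x.val < m then (m:ℝ) * c else 0 := by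
        intro x
        by_cases hx : x.val < m
        · simp only [hx, true_and, if_pos hx]
          exact sum_if_lt_aux _ _ hmN c
        · simp only [hx, false_and, if_false]
          exact Finset.sum_const_zero
      rw [Finset.sum_congr rfl (fun x _ => h1 x), sum_if_lt_aux _ _ hmN _,
        hδ, hcdef]
      field_simp
    -- ### part (iv)
    have p4 : (∑ x, ∑ y, (if x.val < m ∧ y.val < m then PXY x y else 0)) = δ ^ 2 := by
      rw [← hsumblock]
      refine Finset.sum_congr rfl fun x _ => Finset.sum_congr rfl fun y _ => ?_
      by_cases h : x.val < m ∧ y.val < m <;> simp [h, hPXY']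
    refine ⟨p1, p2, p3, p4, ?_⟩
    -- ### part (v)
    intro ε hε0 hε1
    have hicle : ∀ x y : Fin (2^n), ic (tau x y) x y ≤ 2 * (n:ℝ) := by
      intro x y
      by_cases h : x.val < m ∧ y.val < m
      · exact le_of_eq (p1 x y h.1 h.2)
      · exact le_of_lt (lt_of_le_of_lt (p2 x y h) p3)
    have hPnn : ∀ t x y, 0 ≤ P t x y := by
      intro t x y; rw [hP]; split
      · exact le_of_lt hcpos
      · exact le_refl 0
    have hset : {lam : ℝ |
        ε < ∑ t, ∑ x, ∑ y, if lam < ic t x y then P t x y else 0}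
        = Set.Iio (2 * (n:ℝ)) := by
      ext lam
      simp only [Set.mem_setOf_eq, Set.mem_Iio]
      constructor
      · intro h
        by_contra hcon
        push_neg at hcon
        have hzero : (∑ t, ∑ x, ∑ y, if lam < ic t x y then P t x y else 0) = 0 := by
          refine Finset.sum_eq_zero fun t _ => Finset.sum_eq_zero fun x _ =>
            Finset.sum_eq_zero fun y _ => ?_
          by_cases ht : t = tau x y
          · rw [ht]
            exact if_neg (not_lt.mpr ((hicle x y).trans hcon))
          · rw [hP, if_neg ht, ite_self]
        rw [hzero] at h
        linarith
      · intro hlam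
        have hpt : ∀ (t : Fin 3 ⊕ (Fin (2^n) × Fin (2^n))) (x y : Fin (2^n)),
            (if (x.val < m ∧ y.val < m) ∧ t = Sum.inr (x, y) then c else 0)
            ≤ (if lam < ic t x y then P t x y else 0) := by
          intro t x y
          by_cases h : (x.val < m ∧ y.val < m) ∧ t = Sum.inr (x, y)
          · rw [if_pos h]
            have ht : tau x y = Sum.inr (x, y) := by
              rw [htau, if_neg (Nat.not_le.mpr h.1.1), if_neg (Nat.not_le.mpr h.1.2)]
            have hicv : ic t x y = 2 * (n:ℝ) := by
              rw [h.2, ← ht]; exact p1 x y h.1.1 h.1.2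
            rw [if_pos (by rw [hicv]; exact hlam), hP, if_pos (by rw [h.2, ht])]
          · rw [if_neg h]
            by_cases h2 : lam < ic t x y <;> simp [h2, hPnn t x y]
        have hblk : (∑ t : Fin 3 ⊕ (Fin (2^n) × Fin (2^n)), ∑ x : Fin (2^n), ∑ y : Fin (2^n),
            if (x.val < m ∧ y.val < m) ∧ t = Sum.inr (x, y) then c else 0) = δ^2 := by
          rw [Finset.sum_comm]
          have e1 : ∀ x : Fin (2^n), (∑ t : Fin 3 ⊕ (Fin (2^n) × Fin (2^n)), ∑ y : Fin (2^n),
              if (x.val < m ∧ y.val < m) ∧ t = Sum.inr (x, y) then c else 0)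
              = ∑ y : Fin (2^n), (if x.val < m ∧ y.val < m then c else 0) := by
            intro x
            rw [Finset.sum_comm]
            refine Finset.sum_congr rfl fun y _ => ?_
            by_cases h : x.val < m ∧ y.val < m <;> simp [h]
          rw [Finset.sum_congr rfl (fun x _ => e1 x), hsumblock]
        calc ε < δ^2 := hε1
          _ = _ := hblk.symm
          _ ≤ _ := Finset.sum_le_sum fun t _ => Finset.sum_le_sum fun x _ =>
              Finset.sum_le_sum fun y _ => hpt t x y
    rw [hset]
    exact csSup_Iio
end
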